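/- arXiv:2006.15730 — 8 statements merged into one kernel-verified Lean document; each statement's English description precedes it below -/
import Mathlib

section
/- If G is a bipartite graph with parts X and Y satisfying that for every subset A of X with |A| ≥ 3, the set N̂(A) = {y ∈ Y : |N(y) ∩ A| ≥ 2} has size at least |A| and the induced subgraph G[A ∪ N̂(A)] is 2-connected, then any two distinct vertices x, x' ∈ X with |X| ≥ 3 have at least one common neighbor. -/
open SimpleGraph Set

/-- `(X, Y)` is a bipartition of the graph `G`. -/
def IsBipartition {V : Type*} (G : SimpleGraph V) (X Y : Set V) : Prop :=
  X ∪ Y = Set.univ ∧ Disjoint X Y ∧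
    ∀ ⦃u v⦄, G.Adj u v → (u ∈ X ∧ v ∈ Y) ∨ (u ∈ Y ∧ v ∈ X)

/-- The super-neighborhood `N̂(A)`: vertices of `Y` with at least two neighbors in `A`. -/
def superNbhd {V : Type*} (G : SimpleGraph V) (Y A : Set V) : Set V :=
  {y ∈ Y | 2 ≤ (A ∩ G.neighborSet y).ncard}

/-- The subgraph of `G` induced on the vertex set `S` is 2-connected. -/
def TwoConnectedOn {V : Type*} (G : SimpleGraph V) (S : Set V) : Prop :=
  3 ≤ S.ncard ∧ ∀ v ∈ S, (G.induce (S \ {v})).Connected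

/-- Condition (*) for the `(X,Y)`-bigraph `G`. -/
def StarCond {V : Type*} (G : SimpleGraph V) (X Y : Set V) : Prop :=
  ∀ A ⊆ X, 3 ≤ A.ncard →
    A.ncard ≤ (superNbhd G Y A).ncard ∧ TwoConnectedOn G (A ∪ superNbhd G Y A)

/-- `G` has a cycle with all vertices inside `S` whose set of vertices in `X` is exactly `A`. -/
def CycleOnWithin {V : Type*} (G : SimpleGraph V) (X A S : Set V) : Prop :=
  ∃ (v : V) (c : G.Walk v v), c.IsCycle ∧ {u | u ∈ c.support} ⊆ S ∧
    {u | u ∈ c.support} ∩ X = A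

/-- The subgraph of `G` induced on `S` is super-cyclic with respect to the part `X`. -/
def SuperCyclicWithin {V : Type*} (G : SimpleGraph V) (X S : Set V) : Prop :=
  ∀ A ⊆ X, 3 ≤ A.ncard → CycleOnWithin G X A S

/-- `G` is super-cyclic with respect to the part `X`. -/
def SuperCyclic {V : Type*} (G : SimpleGraph V) (X : Set V) : Prop :=
  SuperCyclicWithin G X Set.univ

/-- The `(X,Y)`-bigraph `G` is critical. -/
def Critical {V : Type*} (G : SimpleGraph V) (X Y : Set V) : Prop :=
  StarCond G X Y ∧ ¬ SuperCyclic G X ∧ superNbhd G Y X = Y ∧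
    ∀ X' ⊂ X, SuperCyclicWithin G X' (X' ∪ Y)

/-- The critical `(X,Y)`-bigraph `G` is saturated: adding any `X,Y`-edge makes it super-cyclic. -/
def Saturated {V : Type*} (G : SimpleGraph V) (X Y : Set V) : Prop :=
  ∀ x ∈ X, ∀ y ∈ Y, ¬ G.Adj x y →
    SuperCyclic (G ⊔ SimpleGraph.fromEdgeSet {s(x, y)}) X

/-- `G` is `Y`-minimal: every proper subgraph `(X', Y'; E')` satisfying (*) is super-cyclic. -/
def YMinimal {V : Type*} (G : SimpleGraph V) (X Y : Set V) : Prop :=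
  ∀ (H : SimpleGraph V) (X' Y' : Set V), H ≤ G → X' ⊆ X → Y' ⊆ Y →
    (∀ ⦃u v⦄, H.Adj u v → (u ∈ X' ∧ v ∈ Y') ∨ (u ∈ Y' ∧ v ∈ X')) →
    ¬ (H = G ∧ X' = X ∧ Y' = Y) →
    StarCond H X' Y' → SuperCyclic H X'


/-! Pick a third vertex `x''` of `X` and put `A = {x, x', x''}`. By (*), deleting `x''` from
`G[A ∪ N̂(A)]` leaves a connected graph whose only vertices in `X` are `x` and `x'`. A path from `x`
to `x'` in it must leave the set made of `x` and its neighbours; since every neighbour of `x` lies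
in `Y`, the edge where it does so joins a neighbour of `x` to `x'`. -/

section

variable {V : Type*}

lemma IsBipartition.mem_Y_of_adj_of_mem_X {G : SimpleGraph V} {X Y : Set V}
    (hbip : IsBipartition G X Y) {u v : V} (huv : G.Adj u v) (hu : u ∈ X) : v ∈ Y := by
  rcases hbip.2.2 huv with ⟨-, hv⟩ | ⟨hu', -⟩
  · exact hv
  · exact absurd hu' (hbip.2.1.notMem_of_mem_left hu)

lemma IsBipartition.mem_X_of_adj_of_mem_Y {G : SimpleGraph V} {X Y : Set V}
    (hbip : IsBipartition G X Y) {u v : V} (huv : G.Adj u v) (hu : u ∈ Y) : v ∈ X := by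
  rcases hbip.2.2 huv with ⟨hu', -⟩ | ⟨-, hv⟩
  · exact absurd hu (hbip.2.1.notMem_of_mem_left hu')
  · exact hv

lemma superNbhd_subset (G : SimpleGraph V) (Y A : Set V) : superNbhd G Y A ⊆ Y :=
  fun _ hy => hy.1

lemma IsBipartition.exists_common_neighbor_of_connected_induce {G : SimpleGraph V}
    {X Y S : Set V} (hbip : IsBipartition G X Y) (hS : (G.induce S).Connected)
    {x x' : V} (hx : x ∈ S) (hx' : x' ∈ S) (hne : x ≠ x') (hSX : S ∩ X ⊆ {x, x'})
    (hxX : x ∈ X) (hx'X : x' ∈ X) : (G.neighborSet x ∩ G.neighborSet x').Nonempty := by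
  by_contra hnone
  obtain ⟨p⟩ := hS.preconnected ⟨x, hx⟩ ⟨x', hx'⟩
  obtain ⟨d, -, hfst, hsnd⟩ :=
    p.exists_boundary_dart {v | v.1 = x ∨ G.Adj x v.1} (Or.inl rfl)
      (by
        rintro (h | h)
        exacts [hne h.symm, hbip.2.1.notMem_of_mem_left hx'X (hbip.mem_Y_of_adj_of_mem_X h hxX)])
  simp only [mem_ofPred_eq, not_or] at hfst hsnd
  have hadj : G.Adj d.fst.1 d.snd.1 := d.adj
  rcases hfst with hfst | hfst
  · exact hsnd.2 (hfst ▸ hadj)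
  · have hsndX : d.snd.1 ∈ X :=
      hbip.mem_X_of_adj_of_mem_Y hadj (hbip.mem_Y_of_adj_of_mem_X hfst hxX)
    rcases hSX ⟨d.snd.2, hsndX⟩ with h | h
    · exact hsnd.1 h
    · exact hnone ⟨d.fst.1, hfst, h ▸ hadj.symm⟩

end

theorem stmt_0_general {V : Type*} (G : SimpleGraph V) (X Y : Set V)
    (hbip : IsBipartition G X Y) (hX : 3 ≤ X.ncard) (hstar : StarCond G X Y) :
    ∀ x ∈ X, ∀ x' ∈ X, x ≠ x' → (G.neighborSet x ∩ G.neighborSet x').Nonempty := by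
  intro x hx x' hx' hne
  obtain ⟨x'', hx''X, hx''⟩ : ∃ x'' ∈ X, x'' ∉ ({x, x'} : Set V) :=
    exists_mem_notMem_of_ncard_lt_ncard (by rw [ncard_pair hne]; omega)
  have hx'' : x'' ≠ x ∧ x'' ≠ x' := by simpa [not_or] using hx''
  set A : Set V := {x, x', x''}
  have hAX : A ⊆ X := by rintro a (rfl | rfl | rfl) <;> assumption
  have hA : A.ncard = 3 := ncard_eq_three.mpr ⟨x, x', x'', hne, hx''.1.symm, hx''.2.symm, rfl⟩
  have hconn : (G.induce ((A ∪ superNbhd G Y A) \ {x''})).Connected :=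
    (hstar A hAX hA.ge).2.2 x'' (Or.inl (by simp [A]))
  refine hbip.exists_common_neighbor_of_connected_induce hconn
    ⟨Or.inl (by simp [A]), hx''.1.symm⟩ ⟨Or.inl (by simp [A]), hx''.2.symm⟩ hne ?_ hx hx'
  rintro u ⟨⟨hu | hu, hux''⟩, huX⟩
  · rcases hu with rfl | rfl | rfl
    exacts [Or.inl rfl, Or.inr rfl, absurd rfl hux'']
  · exact absurd huX (hbip.2.1.notMem_of_mem_right (superNbhd_subset G Y A hu))

theorem stmt_0 {V : Type*} [Fintype V] (G : SimpleGraph V) (X Y : Set V)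
    (hbip : IsBipartition G X Y) (hX : 3 ≤ X.ncard) (hstar : StarCond G X Y) :
    ∀ x ∈ X, ∀ x' ∈ X, x ≠ x' → (G.neighborSet x ∩ G.neighborSet x').Nonempty :=
  stmt_0_general G X Y hbip hX hstar
end

section
/- Let G be a bipartite graph with parts X and Y, let x_0 ∈ X, and let C = x_1 y_1 x_2 y_2 … x_k y_k x_1 be a cycle in G − x_0 with base vertex set X − {x_0} (indices mod k). Suppose G has no cycle whose intersection with X is all of X. If y_i and y_j are both neighbors of x_0 (with i ≠ j), then x_i and x_j have no common neighbor outside V(C). -/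
/-!
Suppose `w` is a common neighbour of `x i` and `x j` off `C`. Deleting the edges `x i y i`
and `x j y j` from `C` leaves two disjoint paths `y i … x j` and `y j … x i` which together
cover `V(C)`. Joining their ends through `x₀` and `w` gives the cycle
`x₀ y i … x j w x i … y j x₀`, whose vertices in `X` are all of `X`.
-/

open SimpleGraph Set

namespace ZMod

variable {k : ℕ} [NeZero k]

theorem val_sub_add_val_sub {i j : ZMod k} (hij : i ≠ j) : (j - i).val + (i - j).val = k := by
  rw [← neg_sub, neg_val, if_neg (sub_ne_zero.mpr hij)]
  have := (i - j).val_lt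
  omega

-- For `i ≠ j`, the arcs `i + [0, (j - i).val)` and `j + [0, (i - j).val)` partition `ZMod k`.
theorem add_natCast_ne_add_natCast {i j : ZMod k} {s t : ℕ} (hs : s < (j - i).val)
    (ht : t < (i - j).val) : i + s ≠ j + t := by
  intro h
  have hij : i ≠ j := by rintro rfl; simp at hs
  have hsum := val_sub_add_val_sub hij
  have hcast : ((s : ℕ) : ZMod k) = ((j - i).val + t : ℕ) := by
    push_cast [natCast_zmod_val]
    linear_combination h
  have := congrArg val hcast
  rw [val_cast_of_lt (by omega), val_cast_of_lt (by omega)] at this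
  omega

theorem exists_eq_add_natCast_or {i j : ZMod k} (hij : i ≠ j) (t : ZMod k) :
    (∃ s < (j - i).val, t = i + s) ∨ ∃ s < (i - j).val, t = j + s := by
  by_cases h : (t - i).val < (j - i).val
  · exact .inl ⟨_, h, by rw [natCast_zmod_val]; ring⟩
  · refine .inr ⟨(t - i).val - (j - i).val, ?_, ?_⟩
    · have := val_sub_add_val_sub hij
      have := (t - i).val_lt
      omega
    · rw [Nat.cast_sub (not_lt.mp h), natCast_zmod_val, natCast_zmod_val]
      ring

end ZMod

namespace SimpleGraph.Walk

variable {V : Type*} {G : SimpleGraph V}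

theorem IsPath.append {u v w : V} {p : G.Walk u v} {q : G.Walk v w} (hp : p.IsPath)
    (hq : q.IsPath) (h : ∀ a ∈ p.support, a ∈ q.support → a = v) : (p.append q).IsPath := by
  have hq' := hq.support_nodup
  rw [← cons_tail_support, List.nodup_cons] at hq'
  rw [isPath_def, support_append, List.nodup_append]
  refine ⟨hp.support_nodup, hq'.2, fun a ha b hb hab => ?_⟩
  subst hab
  exact hq'.1 (h a ha (List.mem_of_mem_tail hb) ▸ hb)

theorem IsPath.exists_isCycle_of_disjoint {u w a b a' b' : V} {p : G.Walk a b}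
    {q : G.Walk a' b'} (hp : p.IsPath) (hq : q.IsPath) (hpq : ∀ v ∈ p.support, v ∉ q.support)
    (hup : u ∉ p.support) (huq : u ∉ q.support) (hwp : w ∉ p.support) (hwq : w ∉ q.support)
    (huw : u ≠ w) (ha : G.Adj u a) (ha' : G.Adj u a') (hb : G.Adj b w) (hb' : G.Adj b' w) :
    ∃ c : G.Walk u u, c.IsCycle ∧
      ∀ v, v ∈ c.support ↔ v = u ∨ v = w ∨ v ∈ p.support ∨ v ∈ q.support := by
  let r := (p.concat hb).append (q.concat hb').reverse
  have hr : r.IsPath := by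
    refine (hp.concat hwp _).append (hq.concat hwq _).reverse fun v hv hv' => ?_
    simp only [support_reverse, List.mem_reverse, support_concat, List.mem_append,
      List.mem_singleton] at hv hv'
    rcases hv with hv | rfl
    · rcases hv' with hv' | rfl
      exacts [absurd hv' (hpq v hv), rfl]
    · rfl
  have hur : u ∉ r.support := by
    simp only [r, mem_support_append_iff, support_reverse, List.mem_reverse, support_concat,
      List.mem_append, List.mem_singleton, not_or]
    exact ⟨⟨hup, huw⟩, huq, huw⟩
  refine ⟨cons ha (r.concat ha'.symm), ?_, fun v => ?_⟩
  · rw [cons_isCycle_iff, edges_concat, List.concat_eq_append, List.mem_append,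
      List.mem_singleton]
    refine ⟨hr.concat hur _, ?_⟩
    rintro (he | he)
    · exact hur (r.fst_mem_support_of_mem_edges he)
    · rcases Sym2.eq_iff.mp he with ⟨rfl, -⟩ | ⟨-, rfl⟩
      exacts [huq q.start_mem_support, hpq a p.start_mem_support q.start_mem_support]
  · simp only [r, support_cons, support_concat, mem_support_append_iff, support_reverse,
      List.mem_reverse, List.mem_append, List.mem_cons, List.not_mem_nil]
    tauto

end SimpleGraph.Walk

section CycleArcs

variable {V : Type*} {G : SimpleGraph V} {k : ℕ} {x y : ZMod k → V}

theorem exists_isPath_along_cycle (hxinj : Function.Injective x) (hyinj : Function.Injective y)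
    (hxy : ∀ s t, x s ≠ y t) (hadj1 : ∀ i, G.Adj (x i) (y i))
    (hadj2 : ∀ i, G.Adj (y i) (x (i + 1))) (a : ZMod k) {b : ZMod k} {n : ℕ} (hn : 0 < n)
    (hnk : n ≤ k) (hb : a + n = b) :
    ∃ p : G.Walk (y a) (x b), p.IsPath ∧
      ∀ v, v ∈ p.support ↔ ∃ s < n, v = y (a + s) ∨ v = x (a + s + 1) := by
  subst hb
  induction n, hn using Nat.le_induction with
  | base =>
    refine ⟨(Walk.cons (hadj2 a) .nil).copy rfl (by simp), ?_, fun v => ?_⟩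
    · simpa using (hxy _ _).symm
    · simp
  | succ n hn ih =>
    obtain ⟨p, hp, hsupp⟩ := ih (by omega)
    have hcast_inj := CharP.natCast_injOn_Iio (ZMod k) k
    have hy_new : y (a + n) ∉ p.support := by
      simp only [hsupp, not_exists, not_and, not_or]
      intro s hs
      refine ⟨fun h => ?_, hxy _ _ ∘ Eq.symm⟩
      exact hs.ne' (hcast_inj (by simp; omega) (by simp; omega) (add_left_cancel (hyinj h)))
    have hx_new : x (a + n + 1) ∉ (p.concat (hadj1 (a + n))).support := by
      simp only [Walk.support_concat, List.mem_append, hsupp,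
        List.mem_singleton, not_or, not_exists, not_and]
      refine ⟨fun s hs => ⟨hxy _ _, fun h => ?_⟩, hxy _ _⟩
      exact hs.ne' (hcast_inj (by simp; omega) (by simp; omega)
        (add_left_cancel (add_right_cancel (hxinj h))))
    rw [Nat.cast_succ, ← add_assoc]
    refine ⟨(p.concat (hadj1 _)).concat (hadj2 _), (hp.concat hy_new _).concat hx_new _,
      fun v => ?_⟩
    simp only [Walk.support_concat, List.mem_append, hsupp,
      List.mem_singleton, Nat.exists_lt_succ_right, or_assoc]

theorem exists_disjoint_isPath_arcs [NeZero k] (hxinj : Function.Injective x)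
    (hyinj : Function.Injective y) (hxy : ∀ s t, x s ≠ y t) (hadj1 : ∀ i, G.Adj (x i) (y i))
    (hadj2 : ∀ i, G.Adj (y i) (x (i + 1))) {i j : ZMod k} (hij : i ≠ j) :
    ∃ (p : G.Walk (y i) (x j)) (q : G.Walk (y j) (x i)), p.IsPath ∧ q.IsPath ∧
      (∀ v ∈ p.support, v ∉ q.support) ∧
      ∀ v, v ∈ p.support ∨ v ∈ q.support ↔ v ∈ range x ∪ range y := by
  obtain ⟨p, hp, hpsupp⟩ := exists_isPath_along_cycle hxinj hyinj hxy hadj1 hadj2 i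
    (b := j) (ZMod.val_pos.mpr (sub_ne_zero.mpr hij.symm)) (ZMod.val_lt _).le (by simp)
  obtain ⟨q, hq, hqsupp⟩ := exists_isPath_along_cycle hxinj hyinj hxy hadj1 hadj2 j
    (b := i) (ZMod.val_pos.mpr (sub_ne_zero.mpr hij)) (ZMod.val_lt _).le (by simp)
  refine ⟨p, q, hp, hq, fun v hvp hvq => ?_, fun v => ⟨?_, ?_⟩⟩
  · obtain ⟨s, hs, rfl | rfl⟩ := (hpsupp v).1 hvp <;>
      obtain ⟨t, ht, hv | hv⟩ := (hqsupp _).1 hvq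
    · exact ZMod.add_natCast_ne_add_natCast hs ht (hyinj hv)
    · exact hxy _ _ hv.symm
    · exact hxy _ _ hv
    · exact ZMod.add_natCast_ne_add_natCast hs ht (add_right_cancel (hxinj hv))
  · rintro (hv | hv)
    · obtain ⟨s, -, rfl | rfl⟩ := (hpsupp v).1 hv
      exacts [.inr ⟨_, rfl⟩, .inl ⟨_, rfl⟩]
    · obtain ⟨s, -, rfl | rfl⟩ := (hqsupp v).1 hv
      exacts [.inr ⟨_, rfl⟩, .inl ⟨_, rfl⟩]
  · rintro (⟨t, rfl⟩ | ⟨t, rfl⟩)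
    · rcases ZMod.exists_eq_add_natCast_or hij (t - 1) with ⟨s, hs, ht⟩ | ⟨s, hs, ht⟩
      · exact .inl ((hpsupp _).2 ⟨s, hs, .inr (by rw [← ht, sub_add_cancel])⟩)
      · exact .inr ((hqsupp _).2 ⟨s, hs, .inr (by rw [← ht, sub_add_cancel])⟩)
    · rcases ZMod.exists_eq_add_natCast_or hij t with ⟨s, hs, rfl⟩ | ⟨s, hs, rfl⟩
      exacts [.inl ((hpsupp _).2 ⟨s, hs, .inl rfl⟩), .inr ((hqsupp _).2 ⟨s, hs, .inl rfl⟩)]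

end CycleArcs

theorem stmt_1_general {V : Type*} (G : SimpleGraph V) (X Y : Set V)
    (hbip : IsBipartition G X Y) (x₀ : V) (hx₀ : x₀ ∈ X)
    (k : ℕ) (hk : 2 ≤ k) (x y : ZMod k → V)
    (hxinj : Function.Injective x) (hyinj : Function.Injective y)
    (hxX : ∀ i, x i ∈ X) (hyY : ∀ i, y i ∈ Y)
    (hadj1 : ∀ i, G.Adj (x i) (y i)) (hadj2 : ∀ i, G.Adj (y i) (x (i + 1)))
    (hbase : Set.range x = X \ {x₀})
    (hno : ¬ CycleOnWithin G X X Set.univ) :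
    ∀ i j : ZMod k, i ≠ j → G.Adj x₀ (y i) → G.Adj x₀ (y j) →
      ∀ w, w ∉ Set.range x ∪ Set.range y → ¬ (G.Adj (x i) w ∧ G.Adj (x j) w) := by
  intro i j hij hyi hyj w hw ⟨hwi, hwj⟩
  have : NeZero k := ⟨by omega⟩
  obtain ⟨-, hXY, hbipadj⟩ := hbip
  have hxy : ∀ s t, x s ≠ y t := fun s t => hXY.ne_of_mem (hxX s) (hyY t)
  have hx₀_off : x₀ ∉ range x ∪ range y := by
    rintro (⟨t, ht⟩ | ⟨t, ht⟩)
    · exact (hbase ▸ mem_range_self t : x t ∈ X \ {x₀}).2 ht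
    · exact hXY.ne_of_mem hx₀ (hyY t) ht.symm
  have hx₀w : x₀ ≠ w := by
    rintro rfl
    rcases hbipadj hwi with ⟨-, h⟩ | ⟨h, -⟩
    exacts [hXY.ne_of_mem hx₀ h rfl, hXY.ne_of_mem (hxX i) h rfl]
  obtain ⟨p, q, hp, hq, hpq, hpqsupp⟩ :=
    exists_disjoint_isPath_arcs hxinj hyinj hxy hadj1 hadj2 hij
  have hoff : ∀ v ∉ range x ∪ range y, v ∉ p.support ∧ v ∉ q.support := fun v hv =>
    not_or.mp (mt (hpqsupp v).1 hv)
  obtain ⟨c, hc, hcsupp⟩ := hp.exists_isCycle_of_disjoint hq hpq (hoff x₀ hx₀_off).1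
    (hoff x₀ hx₀_off).2 (hoff w hw).1 (hoff w hw).2 hx₀w hyi hyj hwj hwi
  refine hno ⟨x₀, c, hc, subset_univ _, subset_antisymm inter_subset_right fun u hu => ?_⟩
  refine ⟨(hcsupp u).2 ?_, hu⟩
  by_cases hu₀ : u = x₀
  · exact .inl hu₀
  · exact .inr (.inr ((hpqsupp u).2 (.inl (hbase ▸ ⟨hu, hu₀⟩))))

theorem stmt_1 {V : Type*} [Fintype V] (G : SimpleGraph V) (X Y : Set V)
    (hbip : IsBipartition G X Y) (x₀ : V) (hx₀ : x₀ ∈ X)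
    (k : ℕ) (hk : 2 ≤ k) (x y : ZMod k → V)
    (hxinj : Function.Injective x) (hyinj : Function.Injective y)
    (hxX : ∀ i, x i ∈ X) (hyY : ∀ i, y i ∈ Y)
    (hadj1 : ∀ i, G.Adj (x i) (y i)) (hadj2 : ∀ i, G.Adj (y i) (x (i + 1)))
    (hbase : Set.range x = X \ {x₀})
    (hno : ¬ CycleOnWithin G X X Set.univ) :
    ∀ i j : ZMod k, i ≠ j → G.Adj x₀ (y i) → G.Adj x₀ (y j) →
      ∀ w, w ∉ Set.range x ∪ Set.range y → ¬ (G.Adj (x i) w ∧ G.Adj (x j) w) :=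
  stmt_1_general G X Y hbip x₀ hx₀ k hk x y hxinj hyinj hxX hyY hadj1 hadj2 hbase hno
end

section
/- Let G be a bipartite graph with parts X and Y, let x_0 ∈ X, and let C = x_1 y_1 … x_k y_k x_1 be a cycle with base vertex set X − {x_0}. Suppose G has no cycle based on X. If y_i ∈ N(x_0), then x_i and x_0 have no common neighbor outside V(C), and x_{i+1} and x_0 have no common neighbor outside V(C). -/
open SimpleGraph Set

/- Replacing the edge `y i x (i + 1)` of `C` by the path `y i x₀ w x (i + 1)` through a common
neighbour `w ∉ V(C)` of `x₀` and `x (i + 1)` gives a cycle through `x₀` and all of `V(C)`, hence a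
cycle based on `X`; for a common neighbour of `x₀` and `x i`, replace the edge `x i y i` instead. -/

lemma ZMod.add_one_add_natCast_ne_self {k m : ℕ} (j : ZMod k) (hm : m + 1 < k) :
    j + 1 + m ≠ j := by
  rw [Ne, add_assoc, add_eq_left, ← Nat.cast_one, ← Nat.cast_add, ZMod.natCast_eq_zero_iff]
  exact fun h => (Nat.le_of_dvd (by omega) h).not_gt (by omega)

namespace SimpleGraph.Walk

variable {V : Type*} {G : SimpleGraph V}

lemma IsPath.isCycle_cons {u v : V} {q : G.Walk u v} (hq : q.IsPath) (hlen : q.length ≠ 1)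
    (h : G.Adj v u) : (cons h q).IsCycle :=
  (cons_isCycle_iff q h).mpr
    ⟨hq, fun he => hlen (hq.length_eq_one_of_mem_edges (Sym2.eq_swap ▸ he))⟩

lemma IsPath.isCycle_cons_cons_concat {u v a b : V} {p : G.Walk a b} (hp : p.IsPath)
    (hu : u ∉ p.support) (hv : v ∉ p.support)
    (hvu : G.Adj v u) (hua : G.Adj u a) (hbv : G.Adj b v) :
    (cons hvu (cons hua (p.concat hbv))).IsCycle := by
  refine ((hp.concat hv hbv).cons ?_).isCycle_cons (by simp) hvu
  simpa [support_concat, hvu.ne'] using hu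

lemma IsPath.exists_isCycle_detour {a b c u v : V} {q : G.Walk a b} (hq : q.IsPath)
    (hc : c ∉ q.support) (hu : u ∉ q.support) (hv : v ∉ q.support) (huc : u ≠ c)
    (hca : G.Adj c a) (hbc : G.Adj b c) (hvc : G.Adj v c) (hvu : G.Adj v u)
    (hua : G.Adj u a ∨ G.Adj u b) :
    ∃ r : G.Walk v v, r.IsCycle ∧ ∀ w ∈ q.support, w ∈ r.support := by
  rcases hua with hua | hub
  · refine ⟨_, (hq.concat hc hbc).isCycle_cons_cons_concat ?_ ?_ hvu hua hvc.symm, ?_⟩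
    · simp [support_concat, hu, huc]
    · simp [support_concat, hv, hvc.ne]
    · simp +contextual [support_concat]
  · have ha := q.start_mem_support
    refine ⟨_, (hq.cons hc (h := hca)).reverse.isCycle_cons_cons_concat ?_ ?_ hvu hub hvc.symm, ?_⟩
    · simp [hu, huc, (ne_of_mem_of_not_mem ha hu).symm]
    · simp [hv, hvc.ne, (ne_of_mem_of_not_mem ha hv).symm]
    · simp +contextual

end SimpleGraph.Walk

section CycleArc

variable {V : Type*} {G : SimpleGraph V} {k : ℕ} {x y : ZMod k → V}
  (hx : ∀ i, G.Adj (x i) (y i)) (hy : ∀ i, G.Adj (y i) (x (i + 1)))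

def cycleArc : (n : ℕ) → (j : ZMod k) → G.Walk (x j) (x (j + n))
  | 0, j => Walk.nil.copy rfl (by simp)
  | n + 1, j => .cons (hx j) (.cons (hy j)
      ((cycleArc n (j + 1)).copy rfl (congrArg x (by push_cast; ring))))

lemma mem_support_cycleArc {u : V} : ∀ (n : ℕ) (j : ZMod k),
    u ∈ (cycleArc hx hy n j).support ↔
      (∃ m : Fin (n + 1), x (j + (m : ℕ)) = u) ∨ ∃ m : Fin n, y (j + (m : ℕ)) = u
  | 0, j => by simp [cycleArc, eq_comm]
  | n + 1, j => by
    simp only [cycleArc, Walk.support_cons, Walk.support_copy, List.mem_cons,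
      mem_support_cycleArc n (j + 1), Fin.exists_fin_succ (n := n + 1),
      Fin.exists_fin_succ (n := n), Fin.val_zero, Fin.val_succ]
    push_cast
    simp only [add_zero, add_assoc, add_comm (1 : ZMod k), eq_comm]
    tauto

lemma isPath_cycleArc (hxinj : Function.Injective x) (hyinj : Function.Injective y)
    (hxy : ∀ a b, x a ≠ y b) : ∀ n < k, ∀ j, (cycleArc hx hy n j).IsPath
  | 0, _, j => by simp [cycleArc, Walk.isPath_copy]
  | n + 1, hn, j => by
    have hshift {f : ZMod k → V} (hf : Function.Injective f) (m : ℕ) (hm : m ≤ n) :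
        f (j + 1 + m) ≠ f j :=
      hf.ne (ZMod.add_one_add_natCast_ne_self j (by omega))
    simp only [cycleArc, Walk.cons_isPath_iff, Walk.isPath_copy, Walk.support_cons,
      Walk.support_copy, List.mem_cons, mem_support_cycleArc, not_or, not_exists]
    exact ⟨⟨isPath_cycleArc hxinj hyinj hxy n (by omega) (j + 1), fun m => hxy _ _,
      fun m => hshift hyinj m (by omega)⟩, hxy j j, fun m => hshift hxinj m (by omega),
      fun m h => hxy _ _ h.symm⟩

end CycleArc

lemma exists_isPath_around {V : Type*} {G : SimpleGraph V} {k : ℕ} {x y : ZMod k → V}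
    (hx : ∀ i, G.Adj (x i) (y i)) (hy : ∀ i, G.Adj (y i) (x (i + 1))) (hk : 0 < k)
    (hxinj : Function.Injective x) (hyinj : Function.Injective y) (hxy : ∀ a b, x a ≠ y b)
    (i : ZMod k) :
    ∃ q : G.Walk (x (i + 1)) (x i), q.IsPath ∧ (∀ a, x a ∈ q.support) ∧ y i ∉ q.support ∧
      ∀ u ∈ q.support, u ∈ range x ∪ range y := by
  have : NeZero k := ⟨hk.ne'⟩
  have hend : x (i + 1 + ((k - 1 : ℕ) : ZMod k)) = x i :=
    congrArg x (by rw [Nat.cast_sub hk, ZMod.natCast_self]; ring)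
  refine ⟨(cycleArc hx hy (k - 1) (i + 1)).copy rfl hend,
    (Walk.isPath_copy ..).mpr (isPath_cycleArc hx hy hxinj hyinj hxy _ (by omega) _),
    fun a => ?_, ?_, fun u hu => ?_⟩ <;> simp only [Walk.support_copy, mem_support_cycleArc] at *
  · refine Or.inl ⟨⟨(a - (i + 1)).val, by have := (a - (i + 1)).val_lt; omega⟩, ?_⟩
    simp
  · rintro (⟨m, hm⟩ | ⟨m, hm⟩)
    · exact hxy _ _ hm
    · exact hyinj.ne (ZMod.add_one_add_natCast_ne_self i (by omega)) hm
  · rcases hu with ⟨m, rfl⟩ | ⟨m, rfl⟩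
    exacts [Or.inl ⟨_, rfl⟩, Or.inr ⟨_, rfl⟩]

theorem stmt_2_general {V : Type*} (G : SimpleGraph V) (X Y : Set V)
    (hbip : IsBipartition G X Y) (x₀ : V) (hx₀ : x₀ ∈ X)
    (k : ℕ) (hk : 2 ≤ k) (x y : ZMod k → V)
    (hxinj : Function.Injective x) (hyinj : Function.Injective y)
    (hxX : ∀ i, x i ∈ X) (hyY : ∀ i, y i ∈ Y)
    (hadj1 : ∀ i, G.Adj (x i) (y i)) (hadj2 : ∀ i, G.Adj (y i) (x (i + 1)))
    (hbase : Set.range x = X \ {x₀})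
    (hno : ¬ CycleOnWithin G X X Set.univ) :
    ∀ i : ZMod k, G.Adj x₀ (y i) →
      (∀ w, w ∉ Set.range x ∪ Set.range y → ¬ (G.Adj (x i) w ∧ G.Adj x₀ w)) ∧
      (∀ w, w ∉ Set.range x ∪ Set.range y → ¬ (G.Adj (x (i + 1)) w ∧ G.Adj x₀ w)) := by
  intro i hyi
  have hdisj := hbip.2.1
  obtain ⟨q, hq, hxq, hyq, hqC⟩ := exists_isPath_around hadj1 hadj2 (by omega) hxinj hyinj
    (fun a b => hdisj.ne_of_mem (hxX a) (hyY b)) i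
  have hx₀C : x₀ ∉ range x ∪ range y := by
    rintro (⟨a, ha⟩ | ⟨a, ha⟩)
    · exact (hbase ▸ mem_range_self a : x a ∈ X \ {x₀}).2 ha
    · exact hdisj.ne_of_mem hx₀ (hyY a) ha.symm
  have hcycle (w : V) (hw : w ∉ range x ∪ range y)
      (hwq : G.Adj w (x (i + 1)) ∨ G.Adj w (x i)) (hw₀ : G.Adj x₀ w) : False := by
    obtain ⟨r, hr, hqr⟩ := hq.exists_isCycle_detour hyq (fun h => hw (hqC w h))
      (fun h => hx₀C (hqC x₀ h)) (fun h => hw (.inr ⟨i, h.symm⟩)) (hadj2 i) (hadj1 i) hyi hw₀ hwq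
    refine hno ⟨x₀, r, hr, subset_univ _, inter_eq_right.mpr fun u hu => ?_⟩
    by_cases hux₀ : u = x₀
    · exact hux₀ ▸ r.start_mem_support
    · obtain ⟨a, rfl⟩ : u ∈ range x := hbase ▸ ⟨hu, hux₀⟩
      exact hqr _ (hxq a)
  exact ⟨fun w hw h => hcycle w hw (.inr h.1.symm) h.2,
    fun w hw h => hcycle w hw (.inl h.1.symm) h.2⟩

theorem stmt_2 {V : Type*} [Fintype V] (G : SimpleGraph V) (X Y : Set V)
    (hbip : IsBipartition G X Y) (x₀ : V) (hx₀ : x₀ ∈ X)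
    (k : ℕ) (hk : 2 ≤ k) (x y : ZMod k → V)
    (hxinj : Function.Injective x) (hyinj : Function.Injective y)
    (hxX : ∀ i, x i ∈ X) (hyY : ∀ i, y i ∈ Y)
    (hadj1 : ∀ i, G.Adj (x i) (y i)) (hadj2 : ∀ i, G.Adj (y i) (x (i + 1)))
    (hbase : Set.range x = X \ {x₀})
    (hno : ¬ CycleOnWithin G X X Set.univ) :
    ∀ i : ZMod k, G.Adj x₀ (y i) →
      (∀ w, w ∉ Set.range x ∪ Set.range y → ¬ (G.Adj (x i) w ∧ G.Adj x₀ w)) ∧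
      (∀ w, w ∉ Set.range x ∪ Set.range y → ¬ (G.Adj (x (i + 1)) w ∧ G.Adj x₀ w)) :=
  stmt_2_general G X Y hbip x₀ hx₀ k hk x y hxinj hyinj hxX hyY hadj1 hadj2 hbase hno
end

section
/- Every bipartite graph G with parts X and Y satisfying condition (*) is 3-cyclic: for every subset X' ⊆ X with |X'| = 3, G contains a cycle C with V(C) ∩ X = X'. -/
open SimpleGraph Set

/-!
Let `A = {x₁, x₂, x₃}` and `S = A ∪ N̂(A)`. For `u ∈ A`, the graph on `S - u` is connected and
bipartite with `A - u` on one side, so the two vertices of `A - u` have a common neighbour.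
By 2-connectivity each `x ∈ A` has two neighbours in `N̂(A)`, each a common neighbour of `x` and
another vertex of `A`, and `|N̂(A)| ≥ 3`. These are Hall's conditions for picking distinct common
neighbours `a` of `x₁, x₂`, `b` of `x₂, x₃` and `c` of `x₃, x₁`; then `x₁ a x₂ b x₃ c` is the
required cycle.
-/

lemma Set.exists_transversal_three {α : Type*} {A B C : Set α} (hA : A.Nonempty) (hB : B.Nonempty)
    (hC : C.Nonempty) (hAB : 2 ≤ (A ∪ B).ncard) (hBC : 2 ≤ (B ∪ C).ncard)
    (hCA : 2 ≤ (C ∪ A).ncard) (hABC : 3 ≤ (A ∪ B ∪ C).ncard) :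
    ∃ a ∈ A, ∃ b ∈ B, ∃ c ∈ C, a ≠ b ∧ b ≠ c ∧ a ≠ c := by
  classical
  have hfin : (A ∪ B ∪ C).Finite := finite_of_ncard_pos (by omega)
  have hAf : A.Finite := hfin.subset (by tauto_set)
  have hBf : B.Finite := hfin.subset (by tauto_set)
  have hCf : C.Finite := hfin.subset (by tauto_set)
  have hA₁ := (ncard_pos hAf).2 hA
  have hB₁ := (ncard_pos hBf).2 hB
  have hC₁ := (ncard_pos hCf).2 hC
  rw [union_comm] at hCA
  rw [union_assoc] at hABC
  obtain ⟨f, hf, hfS⟩ := (Finset.all_card_le_biUnion_card_iff_exists_injective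
    ![hAf.toFinset, hBf.toFinset, hCf.toFinset]).1 fun s => by
      rw [← ncard_coe_finset (s.biUnion _), Finset.coe_biUnion]
      fin_cases s <;> simp [← Multiset.cons_zero, Finset.mk_cons] <;> omega
  exact ⟨f 0, by simpa using hfS 0, f 1, by simpa using hfS 1, f 2, by simpa using hfS 2,
    hf.ne (by decide), hf.ne (by decide), hf.ne (by decide)⟩

namespace SimpleGraph

variable {V : Type*} {G : SimpleGraph V}

lemma exists_adj_mem_of_induce_connected {T : Set V} (hT : (G.induce T).Connected)
    (hT' : T.Nontrivial) {v : V} (hv : v ∈ T) : ∃ u ∈ T, G.Adj v u := by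
  have := hT'.coe_sort
  obtain ⟨u, hu⟩ := hT.preconnected.exists_adj_of_nontrivial ⟨v, hv⟩
  exact ⟨u, u.2, hu⟩

lemma commonNeighbors_nonempty_of_induce_connected {T : Set V} (hT : (G.induce T).Connected)
    {v w : V} (hv : v ∈ T) (hw : w ∈ T) (hvw : v ≠ w) (hnadj : ¬ G.Adj v w)
    (hnbr : ∀ y ∈ T, ∀ z ∈ T, G.Adj v y → G.Adj y z → z = v ∨ z = w) :
    (G.commonNeighbors v w).Nonempty := by
  by_contra hempty
  obtain ⟨p⟩ := hT.preconnected ⟨v, hv⟩ ⟨w, hw⟩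
  obtain ⟨d, -, hfst, hsnd⟩ := p.exists_boundary_dart {z | z.1 = v ∨ G.Adj v z.1}
    (Or.inl rfl) (by simp [hvw.symm, hnadj])
  have hadj : G.Adj d.fst.1 d.snd.1 := d.adj
  rcases hfst with hfst | hfst
  · exact hsnd (Or.inr (hfst ▸ hadj))
  · rcases hnbr _ d.fst.2 _ d.snd.2 hfst hadj with h | h
    · exact hsnd (Or.inl h)
    · exact hempty ⟨d.fst.1, hfst, h ▸ hadj.symm⟩

lemma exists_isCycle_of_hexagon {x₁ a x₂ b x₃ c : V} (hnodup : [a, x₂, b, x₃, c, x₁].Nodup)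
    (h₁ : G.Adj x₁ a) (h₂ : G.Adj a x₂) (h₃ : G.Adj x₂ b) (h₄ : G.Adj b x₃) (h₅ : G.Adj x₃ c)
    (h₆ : G.Adj c x₁) :
    ∃ w : G.Walk x₁ x₁, w.IsCycle ∧ {u | u ∈ w.support} = {x₁, a, x₂, b, x₃, c} := by
  refine ⟨.cons h₁ (.cons h₂ (.cons h₃ (.cons h₄ (.cons h₅ (.cons h₆ .nil))))), ?_, ?_⟩
  · rw [Walk.isCycle_iff_isPath_tail_and_le_length]
    simpa [Walk.isPath_def] using hnodup
  · ext u
    simp only [Walk.support_cons, Walk.support_nil, List.mem_cons, List.not_mem_nil, or_false,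
      mem_ofPred_eq, mem_insert_iff, mem_singleton_iff]
    tauto

end SimpleGraph

namespace TwoConnectedOn

variable {V : Type*} {G : SimpleGraph V}

lemma nontrivial_diff_singleton {S : Set V} (hS : TwoConnectedOn G S) (u : V) :
    (S \ {u}).Nontrivial := by
  have hfin : S.Finite := finite_of_ncard_pos (by have := hS.1; omega)
  refine (one_lt_ncard_iff_nontrivial_and_finite.1 ?_).1
  have := S.pred_ncard_le_ncard_sdiff_singleton u
  have := hS.1
  omega

lemma exists_two_adj {S : Set V} (hS : TwoConnectedOn G S) {v : V} (hv : v ∈ S) :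
    ∃ y₁ ∈ S, ∃ y₂ ∈ S, y₁ ≠ y₂ ∧ G.Adj v y₁ ∧ G.Adj v y₂ := by
  obtain ⟨u, hu, huv⟩ := exists_ne_of_one_lt_ncard (s := S) (by have := hS.1; omega) v
  obtain ⟨y₁, hy₁, hvy₁⟩ := exists_adj_mem_of_induce_connected (hS.2 u hu)
    (hS.nontrivial_diff_singleton u) ⟨hv, huv.symm⟩
  obtain ⟨y₂, hy₂, hvy₂⟩ := exists_adj_mem_of_induce_connected (hS.2 y₁ hy₁.1)
    (hS.nontrivial_diff_singleton y₁) ⟨hv, hvy₁.ne⟩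
  exact ⟨y₁, hy₁.1, y₂, hy₂.1, fun h => hy₂.2 h.symm, hvy₁, hvy₂⟩

end TwoConnectedOn

lemma exists_ne_adj_of_mem_superNbhd {V : Type*} {G : SimpleGraph V} {Y A : Set V} {y : V}
    (hy : y ∈ superNbhd G Y A) (x : V) : ∃ x' ∈ A, x' ≠ x ∧ G.Adj x' y := by
  obtain ⟨x', hx', hne⟩ := exists_ne_of_one_lt_ncard hy.2 x
  exact ⟨x', hx'.1, hne, hx'.2.symm⟩

namespace IsBipartition

variable {V : Type*} {G : SimpleGraph V} {X Y : Set V}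

lemma notMem_right (h : IsBipartition G X Y) {x : V} (hx : x ∈ X) : x ∉ Y :=
  disjoint_left.1 h.2.1 hx

lemma mem_right_of_adj (h : IsBipartition G X Y) {x y : V} (hx : x ∈ X) (hxy : G.Adj x y) :
    y ∈ Y :=
  (h.2.2 hxy).elim And.right fun h' => absurd h'.1 (h.notMem_right hx)

lemma mem_left_of_adj (h : IsBipartition G X Y) {x y : V} (hy : y ∈ Y) (hyx : G.Adj y x) :
    x ∈ X :=
  (h.2.2 hyx).elim (fun h' => absurd hy (h.notMem_right h'.1)) And.right

lemma not_adj_of_mem_left (h : IsBipartition G X Y) {x x' : V} (hx : x ∈ X) (hx' : x' ∈ X) :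
    ¬ G.Adj x x' :=
  fun hadj => h.notMem_right hx' (h.mem_right_of_adj hx hadj)

variable {A : Set V}

lemma exists_two_adj_superNbhd (h : IsBipartition G X Y) (hA : A ⊆ X)
    (hS : TwoConnectedOn G (A ∪ superNbhd G Y A)) {x : V} (hx : x ∈ A) :
    ∃ y₁ ∈ superNbhd G Y A, ∃ y₂ ∈ superNbhd G Y A, y₁ ≠ y₂ ∧ G.Adj x y₁ ∧ G.Adj x y₂ := by
  have hmem : ∀ {y}, y ∈ A ∪ superNbhd G Y A → G.Adj x y → y ∈ superNbhd G Y A :=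
    fun hy hxy => hy.resolve_left fun hyA => h.not_adj_of_mem_left (hA hx) (hA hyA) hxy
  obtain ⟨y₁, hy₁, y₂, hy₂, hne, hxy₁, hxy₂⟩ := hS.exists_two_adj (Or.inl hx)
  exact ⟨y₁, hmem hy₁ hxy₁, y₂, hmem hy₂ hxy₂, hne, hxy₁, hxy₂⟩

/-- Removing `u` leaves a connected graph in which the neighbours of `v` see only `v` and `w`. -/
lemma commonNeighbors_nonempty (h : IsBipartition G X Y) (hA : A ⊆ X)
    (hS : TwoConnectedOn G (A ∪ superNbhd G Y A)) {u v w : V} (hA₃ : A = {u, v, w})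
    (huv : u ≠ v) (huw : u ≠ w) (hvw : v ≠ w) : (G.commonNeighbors v w).Nonempty := by
  subst hA₃
  refine commonNeighbors_nonempty_of_induce_connected (hS.2 u (by simp))
    ⟨by simp, huv.symm⟩ ⟨by simp, huw.symm⟩ hvw
    (h.not_adj_of_mem_left (hA (by simp)) (hA (by simp))) ?_
  rintro y - z ⟨hz, hzu⟩ hvy hyz
  have hzA : z ∈ ({u, v, w} : Set V) := hz.resolve_right fun hzN =>
    h.notMem_right (h.mem_left_of_adj (h.mem_right_of_adj (hA (by simp)) hvy) hyz) hzN.1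
  exact hzA.resolve_left hzu

end IsBipartition

lemma IsBipartition.exists_transversal_commonNeighbors {V : Type*} [Finite V] {G : SimpleGraph V}
    {X Y : Set V} (h : IsBipartition G X Y) {x₁ x₂ x₃ : V} (hX : {x₁, x₂, x₃} ⊆ X)
    (h₁₂ : x₁ ≠ x₂) (h₁₃ : x₁ ≠ x₃) (h₂₃ : x₂ ≠ x₃) (hN : 3 ≤ (superNbhd G Y {x₁, x₂, x₃}).ncard)
    (hS : TwoConnectedOn G ({x₁, x₂, x₃} ∪ superNbhd G Y {x₁, x₂, x₃})) :
    ∃ a ∈ G.commonNeighbors x₁ x₂, ∃ b ∈ G.commonNeighbors x₂ x₃, ∃ c ∈ G.commonNeighbors x₃ x₁,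
      a ≠ b ∧ b ≠ c ∧ a ≠ c := by
  set A : Set V := {x₁, x₂, x₃}
  have hpair : ∀ {x : V} {P Q : Set V}, x ∈ A →
      (∀ x' ∈ A, x' ≠ x → ∀ y, G.Adj x y → G.Adj x' y → y ∈ P ∪ Q) → 2 ≤ (P ∪ Q).ncard := by
    intro x P Q hx hPQ
    obtain ⟨y₁, hy₁, y₂, hy₂, hne, hxy₁, hxy₂⟩ := h.exists_two_adj_superNbhd hX hS hx
    have hmem : ∀ {y}, y ∈ superNbhd G Y A → G.Adj x y → y ∈ P ∪ Q := fun hy hxy => by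
      obtain ⟨x', hx', hx'x, hx'y⟩ := exists_ne_adj_of_mem_superNbhd hy x
      exact hPQ x' hx' hx'x _ hxy hx'y
    exact (one_lt_ncard (toFinite _)).2 ⟨y₁, hmem hy₁ hxy₁, y₂, hmem hy₂ hxy₂, hne⟩
  have hcover : superNbhd G Y A ⊆
      G.commonNeighbors x₁ x₂ ∪ G.commonNeighbors x₂ x₃ ∪ G.commonNeighbors x₃ x₁ := by
    intro y hy
    obtain ⟨x, hx, -, hxy⟩ := exists_ne_adj_of_mem_superNbhd hy x₁
    obtain ⟨x', hx', hx'x, hx'y⟩ := exists_ne_adj_of_mem_superNbhd hy x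
    simp only [mem_union, mem_commonNeighbors]
    rcases hx with rfl | rfl | rfl <;> rcases hx' with rfl | rfl | rfl <;> tauto
  refine exists_transversal_three
    (h.commonNeighbors_nonempty hX hS (by ext; simp [A]; tauto) h₁₃.symm h₂₃.symm h₁₂)
    (h.commonNeighbors_nonempty hX hS rfl h₁₂ h₁₃ h₂₃)
    (h.commonNeighbors_nonempty hX hS (by ext; simp [A]; tauto) h₂₃ h₁₂.symm h₁₃.symm)
    (hpair (x := x₂) (by simp [A]) ?_) (hpair (x := x₃) (by simp [A]) ?_)
    (hpair (x := x₁) (by simp [A]) ?_)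
    (hN.trans (ncard_le_ncard hcover))
  all_goals
    intro x' hx' hne y h1 h2
    simp only [mem_union, mem_commonNeighbors]
    rcases hx' with rfl | rfl | rfl <;> tauto

theorem stmt_4_general {V : Type*} [Fintype V] (G : SimpleGraph V) (X Y : Set V)
    (hbip : IsBipartition G X Y) (hstar : StarCond G X Y) :
    ∀ X' ⊆ X, X'.ncard = 3 → CycleOnWithin G X X' Set.univ := by
  intro X' hX' h3
  obtain ⟨x₁, x₂, x₃, h₁₂, h₁₃, h₂₃, rfl⟩ := ncard_eq_three.mp h3
  obtain ⟨hN, hS⟩ := hstar _ hX' h3.ge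
  obtain ⟨a, ⟨ha₁, ha₂⟩, b, ⟨hb₂, hb₃⟩, c, ⟨hc₃, hc₁⟩, hab, hbc, hac⟩ :=
    hbip.exists_transversal_commonNeighbors hX' h₁₂ h₁₃ h₂₃ (h3 ▸ hN) hS
  have hx₁ : x₁ ∈ X := hX' (by simp)
  have hx₂ : x₂ ∈ X := hX' (by simp)
  have hx₃ : x₃ ∈ X := hX' (by simp)
  have ha : a ∉ X := fun haX => hbip.notMem_right haX (hbip.mem_right_of_adj hx₁ ha₁)
  have hb : b ∉ X := fun hbX => hbip.notMem_right hbX (hbip.mem_right_of_adj hx₂ hb₂)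
  have hc : c ∉ X := fun hcX => hbip.notMem_right hcX (hbip.mem_right_of_adj hx₃ hc₃)
  obtain ⟨w, hw, hsupp⟩ := exists_isCycle_of_hexagon
    (by simp only [List.nodup_cons, List.mem_cons, List.not_mem_nil]; grind)
    ha₁ ha₂.symm hb₂ hb₃.symm hc₃ hc₁.symm
  refine ⟨x₁, w, hw, subset_univ _, ?_⟩
  rw [hsupp]
  ext u
  simp only [mem_inter_iff, mem_insert_iff, mem_singleton_iff]
  grind

theorem stmt_4 {V : Type*} [Fintype V] (G : SimpleGraph V) (X Y : Set V)
    (hbip : IsBipartition G X Y) (hX : 3 ≤ X.ncard) (hstar : StarCond G X Y) :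
    ∀ X' ⊆ X, X'.ncard = 3 → CycleOnWithin G X X' Set.univ :=
  stmt_4_general G X Y hbip hstar
end

section
/- If G is a saturated critical bipartite graph with parts X and Y, then no vertex y ∈ Y has degree exactly |X| − 1. -/
open SimpleGraph Set

/-!
Let `y₀ ∈ Y` have degree `|X| - 1` and let `x₀` be its only non-neighbour in `X`; as
`y₀ ∈ N̂(X)`, `|X| ≥ 3`. We show that `G` is super-cyclic, contradicting criticality. Proper
subsets of `X` are handled by criticality, so only a cycle through all of `X` is needed.
Saturation gives one in `G + x₀y₀`; if it uses the new edge, deleting it leaves a path `q` from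
`x₀` to `y₀` through `X`. Since `y₀` sees every vertex of `X` but `x₀`, a chord at `x₀` rotates
`q` into a cycle: if `x₀` has a neighbour `y` on `q` other than its successor, follow `q` to the
vertex before `y`, jump to `y₀` and run back along `q` to `y`; if `y` is off `q` but adjacent to
an `X`-vertex `x` of `q` beyond the second one, do the same with `x` in place of `y` (skipping the
vertex before `x`) and close through `y`. When no chord works, even after exchanging the successor `y₁` of `x₀` with another
neighbour, all neighbours of `x₀` only see `x₀` and the second `X`-vertex `x₁`, so `x₁` (or `y₁`,
if `x₀` has degree one) is a cut vertex, against the 2-connectivity that (*) gives for `A = X`.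
-/

theorem Set.exists_notMem_diff_singleton_subset {α : Type*} {S X : Set α} (hX : X.Finite)
    (hSX : S ⊆ X) (hS : S.ncard + 1 = X.ncard) : ∃ x ∈ X, x ∉ S ∧ X \ {x} ⊆ S := by
  obtain ⟨x, hxX, hxS⟩ := exists_of_ssubset (hSX.ssubset_of_ne (by rintro rfl; omega))
  have hSx : S ⊆ X \ {x} := fun y hy ↦ ⟨hSX hy, fun h ↦ hxS (h ▸ hy)⟩
  refine ⟨x, hxX, hxS, (eq_of_subset_of_ncard_le hSx ?_ hX.sdiff).ge⟩
  rw [ncard_sdiff_singleton_of_mem hxX]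
  omega

theorem CycleOnWithin.univ_of_union {V : Type*} {G : SimpleGraph V} {X Y A : Set V}
    (hdisj : Disjoint X Y) (hA : A ⊆ X) (h : CycleOnWithin G A A (A ∪ Y)) :
    CycleOnWithin G X A univ := by
  obtain ⟨u, c, hc, hcY, hcA⟩ := h
  refine ⟨u, c, hc, subset_univ _, subset_antisymm ?_ (subset_inter (inter_eq_right.mp hcA) hA)⟩
  rintro w ⟨hw, hwX⟩
  exact (hcY hw).resolve_right (hdisj.notMem_of_mem_left hwX)

namespace SimpleGraph

variable {V : Type*} {G : SimpleGraph V}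

def HasCycleThrough (G : SimpleGraph V) (S : Set V) : Prop :=
  ∃ (u : V) (c : G.Walk u u), c.IsCycle ∧ S ⊆ {w | w ∈ c.support}

theorem HasCycleThrough.mono {S T : Set V} (h : G.HasCycleThrough T) (hST : S ⊆ T) :
    G.HasCycleThrough S := by
  obtain ⟨u, c, hc, hT⟩ := h
  exact ⟨u, c, hc, hST.trans hT⟩

theorem HasCycleThrough.cycleOnWithin_univ {X : Set V} (h : G.HasCycleThrough X) :
    CycleOnWithin G X X univ := by
  obtain ⟨u, c, hc, hX⟩ := h
  exact ⟨u, c, hc, subset_univ _, inter_eq_right.mpr hX⟩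

theorem not_connected_induce_of_closed {z a b : V} {K : Set V} (ha : a ∈ K) (haz : a ≠ z)
    (hb : b ∉ K) (hbz : b ≠ z) (hK : ∀ u ∈ K, ∀ v, G.Adj u v → v ≠ z → v ∈ K) :
    ¬ (G.induce (univ \ {z})).Connected := by
  intro hconn
  obtain ⟨p⟩ := hconn.preconnected ⟨a, by simpa⟩ ⟨b, by simpa⟩
  obtain ⟨d, -, hd, hd'⟩ := p.exists_boundary_dart {v | v.1 ∈ K} ha hb
  exact hd' (hK _ hd _ d.adj d.snd.2.2)

namespace Walk

variable {u v : V}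

theorem IsCycle.exists_isPath_of_mem_edges {c : G.Walk u u} (hc : c.IsCycle)
    (he : s(u, v) ∈ c.edges) :
    ∃ p : G.Walk v u, p.IsPath ∧ s(u, v) ∉ p.edges ∧ ∀ w ∈ c.support, w ∈ p.support := by
  obtain ⟨c, hc, rfl, hverts⟩ :=
    hc.exists_isCycle_snd_verts_eq (adj_toSubgraph_iff_mem_edges.mpr he)
  have hcons := c.cons_tail_eq hc.not_nil
  rw [← hcons, cons_isCycle_iff] at hc
  refine ⟨c.tail, hc.1, hc.2, fun w hw ↦ ?_⟩
  have hw : w ∈ c.support := by rwa [← mem_verts_toSubgraph, hverts, mem_verts_toSubgraph]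
  rw [← hcons, support_cons, List.mem_cons] at hw
  exact hw.elim (· ▸ c.tail.end_mem_support) id

theorem edges_subset_edgeSet_of_notMem {e : Sym2 V} (p : (G ⊔ fromEdgeSet {e}).Walk u v)
    (he : e ∉ p.edges) : ∀ e' ∈ p.edges, e' ∈ G.edgeSet := by
  intro e' he'
  have := p.edges_subset_edgeSet he'
  rw [edgeSet_sup, edgeSet_fromEdgeSet] at this
  rcases this with h | ⟨rfl, -⟩
  · exact h
  · exact absurd he' he

theorem IsPath.cons_isCycle_of_two_le_length {p : G.Walk v u} (hp : p.IsPath) (h : G.Adj u v)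
    (hl : 2 ≤ p.length) : (cons h p).IsCycle :=
  isCycle_iff_isPath_tail_and_le_length.mpr ⟨by simpa using hp, by simpa using hl⟩

theorem IsPath.cons_cons_of_notMem_support {a b b' c w : V} {h₁ : G.Adj a b} {h₂ : G.Adj b c}
    {r : G.Walk c w} (hp : (cons h₁ (cons h₂ r)).IsPath) (h₁' : G.Adj a b') (h₂' : G.Adj b' c)
    (hb' : b' ∉ (cons h₁ (cons h₂ r)).support) : (cons h₁' (cons h₂' r)).IsPath := by
  simp only [cons_isPath_iff, support_cons, List.mem_cons, not_or] at hp hb' ⊢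
  exact ⟨⟨hp.1.1, hb'.2.2⟩, h₁'.ne, hp.2.2⟩

def jumpBack (q : G.Walk u v) (j i : ℕ) (h : G.Adj (q.getVert j) v) : G.Walk u (q.getVert i) :=
  (q.take j).append (cons h (q.drop i).reverse)

variable {q : G.Walk u v} {j i : ℕ} {h : G.Adj (q.getVert j) v}

theorem support_jumpBack (hi : i ≤ q.length) :
    (q.jumpBack j i h).support = q.support.take (j + 1) ++ (q.support.drop i).reverse := by
  simp [jumpBack, support_append, support_take, Nat.min_eq_left hi]

theorem length_jumpBack (hji : j ≤ i) (hi : i ≤ q.length) :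
    (q.jumpBack j i h).length = j + 1 + (q.length - i) := by
  simp only [jumpBack, length_append, take_length, length_cons, length_reverse, drop_length]
  omega

theorem IsPath.jumpBack (hq : q.IsPath) (hji : j < i) (hi : i ≤ q.length) :
    (q.jumpBack j i h).IsPath := by
  rw [isPath_def, support_jumpBack hi]
  have hsub : (q.support.take (j + 1) ++ q.support.drop i).Sublist q.support := by
    conv_rhs => rw [← List.take_append_drop i q.support]
    exact (List.take_sublist_take_left (by omega)).append_right _
  exact ((List.reverse_perm _).append_left _).nodup_iff.mpr (hsub.nodup hq.support_nodup)

theorem mem_support_of_mem_support_jumpBack (hi : i ≤ q.length) {w : V}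
    (hw : w ∈ (q.jumpBack j i h).support) : w ∈ q.support := by
  rw [support_jumpBack hi, List.mem_append, List.mem_reverse] at hw
  exact hw.elim List.mem_of_mem_take List.mem_of_mem_drop

theorem getVert_mem_support_jumpBack {k : ℕ} (hk : k ≤ j ∨ i ≤ k) :
    q.getVert k ∈ (q.jumpBack j i h).support := by
  rw [jumpBack, mem_support_append_iff, support_cons, support_reverse, List.mem_cons,
    List.mem_reverse]
  rcases hk with hk | hk
  · left
    simpa [take_getVert, Nat.min_eq_right hk] using (q.take j).getVert_mem_support k
  · right; right
    simpa [drop_getVert, Nat.add_sub_cancel' hk] using (q.drop i).getVert_mem_support (k - i)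

end Walk

theorem HasCycleThrough.of_sup_fromEdgeSet {u v : V} {S : Set V}
    (h : (G ⊔ fromEdgeSet {s(u, v)}).HasCycleThrough S) :
    G.HasCycleThrough S ∨ ∃ p : G.Walk u v, p.IsPath ∧ S ⊆ {w | w ∈ p.support} := by
  classical
  obtain ⟨w, c, hc, hS⟩ := h
  by_cases he : s(u, v) ∈ c.edges
  · have hu : u ∈ c.support := c.fst_mem_support_of_mem_edges he
    obtain ⟨p, hp, hpe, hcp⟩ :=
      (hc.rotate hu).exists_isPath_of_mem_edges ((c.rotate_edges u hu).mem_iff.mpr he)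
    have hpe' : s(u, v) ∉ p.reverse.edges := by simpa [Sym2.eq_swap] using hpe
    refine .inr ⟨p.reverse.transfer G (p.reverse.edges_subset_edgeSet_of_notMem hpe'),
      hp.reverse.transfer _, fun x hx ↦ ?_⟩
    simpa using hcp x ((c.mem_support_rotate_iff u hu).mpr (hS hx))
  · exact .inl ⟨w, c.transfer G (c.edges_subset_edgeSet_of_notMem he), hc.transfer _,
      by simpa using hS⟩

section Bipartite

variable {X Y : Set V} {x₀ y₀ : V} {q : G.Walk x₀ y₀}

theorem hasCycleThrough_support_of_adj_mem_support (hbip : G.IsBipartiteWith X Y) (hx₀ : x₀ ∈ X)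
    (hy₀ : ∀ x ∈ X, x ≠ x₀ → G.Adj x y₀) (hq : q.IsPath) {y : V} (hy : G.Adj x₀ y)
    (hyq : y ∈ q.support) (hy₁ : y ≠ q.snd) : G.HasCycleThrough {w | w ∈ q.support} := by
  obtain ⟨i, rfl, hi⟩ := Walk.mem_support_iff_exists_getVert.mp hyq
  have hi0 : i ≠ 0 := by rintro rfl; simp at hy
  have hi1 : i ≠ 1 := by rintro rfl; exact hy₁ rfl
  have hw : G.Adj (q.getVert (i - 1)) (q.getVert i) := by
    simpa [Nat.sub_add_cancel (Nat.one_le_iff_ne_zero.mpr hi0)] using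
      q.adj_getVert_succ (i := i - 1) (by omega)
  have hwX : q.getVert (i - 1) ∈ X := hbip.mem_of_mem_adj' (hbip.mem_of_mem_adj hx₀ hy) hw
  have hwx₀ : q.getVert (i - 1) ≠ x₀ := fun h ↦ by
    have := hq.getVert_injOn (show i - 1 ≤ q.length by omega) (Nat.zero_le _)
      (h.trans q.getVert_zero.symm)
    omega
  refine ⟨_, .cons hy.symm (q.jumpBack (i - 1) i (hy₀ _ hwX hwx₀)),
    (hq.jumpBack (by omega) hi).cons_isCycle_of_two_le_length _
      (by rw [Walk.length_jumpBack (by omega) hi]; omega), fun u hu ↦ ?_⟩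
  obtain ⟨k, rfl, -⟩ := Walk.mem_support_iff_exists_getVert.mp hu
  exact List.mem_cons_of_mem _ (Walk.getVert_mem_support_jumpBack (by omega))

theorem hasCycleThrough_inter_support_of_adj_adj (hbip : G.IsBipartiteWith X Y) (hx₀ : x₀ ∈ X)
    (hy₀ : ∀ x ∈ X, x ≠ x₀ → G.Adj x y₀) (hq : q.IsPath) {y x : V} (hy : G.Adj x₀ y)
    (hyq : y ∉ q.support) (hyx : G.Adj y x) (hxq : x ∈ q.support) (hxx₀ : x ≠ x₀)
    (hx₁ : x ≠ q.getVert 2) : G.HasCycleThrough (X ∩ {w | w ∈ q.support}) := by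
  have hyY : y ∈ Y := hbip.mem_of_mem_adj hx₀ hy
  obtain ⟨i, rfl, hi⟩ := Walk.mem_support_iff_exists_getVert.mp hxq
  have hxX : q.getVert i ∈ X := hbip.mem_of_mem_adj' hyY hyx.symm
  have hi0 : i ≠ 0 := by rintro rfl; exact hxx₀ q.getVert_zero
  have hi1 : i ≠ 1 := by
    rintro rfl
    have h01 := q.adj_getVert_succ (i := 0) (by omega)
    rw [Walk.getVert_zero] at h01
    exact hbip.disjoint.ne_of_mem hxX (hbip.mem_of_mem_adj hx₀ h01) rfl
  have hi2 : i ≠ 2 := by rintro rfl; exact hx₁ rfl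
  have hv : G.Adj (q.getVert (i - 1)) (q.getVert i) := by
    simpa [Nat.sub_add_cancel (Nat.one_le_iff_ne_zero.mpr hi0)] using
      q.adj_getVert_succ (i := i - 1) (by omega)
  have hw : G.Adj (q.getVert (i - 2)) (q.getVert (i - 1)) := by
    simpa [show i - 2 + 1 = i - 1 by omega] using q.adj_getVert_succ (i := i - 2) (by omega)
  have hwX : q.getVert (i - 2) ∈ X := hbip.mem_of_mem_adj' (hbip.symm.mem_of_mem_adj' hxX hv) hw
  have hwx₀ : q.getVert (i - 2) ≠ x₀ := fun h ↦ by
    have := hq.getVert_injOn (show i - 2 ≤ q.length by omega) (Nat.zero_le _)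
      (h.trans q.getVert_zero.symm)
    omega
  have hP := hq.jumpBack (h := hy₀ _ hwX hwx₀) (by omega) hi
  have hyP : y ∉ (q.jumpBack (i - 2) i (hy₀ _ hwX hwx₀)).support :=
    fun h ↦ hyq (Walk.mem_support_of_mem_support_jumpBack hi h)
  refine ⟨_, .cons hy.symm ((q.jumpBack (i - 2) i (hy₀ _ hwX hwx₀)).concat hyx.symm),
    (hP.concat hyP _).cons_isCycle_of_two_le_length _
      (by rw [Walk.length_concat, Walk.length_jumpBack (by omega) hi]; omega), ?_⟩
  rintro u ⟨huX, hu⟩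
  obtain ⟨k, rfl, -⟩ := Walk.mem_support_iff_exists_getVert.mp hu
  have hk : k ≠ i - 1 := by
    rintro rfl
    exact hbip.disjoint.ne_of_mem huX (hbip.symm.mem_of_mem_adj' hxX hv) rfl
  rw [mem_ofPred_eq, Walk.support_cons, Walk.support_concat]
  exact List.mem_cons_of_mem _ (List.mem_append_left _
    (Walk.getVert_mem_support_jumpBack (by omega)))

theorem notMem_support_and_adj_of_not_hasCycleThrough (hbip : G.IsBipartiteWith X Y)
    (hx₀ : x₀ ∈ X) (hy₀ : ∀ x ∈ X, x ≠ x₀ → G.Adj x y₀) (hq : q.IsPath)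
    (hXq : X ⊆ {w | w ∈ q.support}) (hno : ¬ G.HasCycleThrough X) {y : V} (hy : G.Adj x₀ y)
    (hy₁ : y ≠ q.snd) : y ∉ q.support ∧ ∀ x, G.Adj y x → x = x₀ ∨ x = q.getVert 2 := by
  have hyq : y ∉ q.support := fun hyq ↦
    hno ((hasCycleThrough_support_of_adj_mem_support hbip hx₀ hy₀ hq hy hyq hy₁).mono hXq)
  refine ⟨hyq, fun x hyx ↦ ?_⟩
  by_contra! hx
  have hxX : x ∈ X := hbip.symm.mem_of_mem_adj (hbip.mem_of_mem_adj hx₀ hy) hyx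
  exact hno ((hasCycleThrough_inter_support_of_adj_adj hbip hx₀ hy₀ hq hy hyq hyx (hXq hxX)
    hx.1 hx.2).mono (subset_inter subset_rfl hXq))

theorem notMem_support_and_adj_getVert_two_of_not_hasCycleThrough
    (hbip : G.IsBipartiteWith X Y) (hx₀ : x₀ ∈ X) (hy₀Y : y₀ ∈ Y)
    (hy₀ : ∀ x ∈ X, x ≠ x₀ → G.Adj x y₀) (hconn : ∀ z, (G.induce (univ \ {z})).Connected)
    (hq : q.IsPath) (hXq : X ⊆ {w | w ∈ q.support}) (hno : ¬ G.HasCycleThrough X) {y : V}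
    (hy : G.Adj x₀ y) (hy₁ : y ≠ q.snd) : y ∉ q.support ∧ G.Adj y (q.getVert 2) := by
  obtain ⟨hyq, hyN⟩ :=
    notMem_support_and_adj_of_not_hasCycleThrough hbip hx₀ hy₀ hq hXq hno hy hy₁
  refine ⟨hyq, by_contra fun h ↦ ?_⟩
  have hyy₀ : y ≠ y₀ := fun h ↦ hyq (h ▸ q.end_mem_support)
  refine not_connected_induce_of_closed (z := x₀) (K := {y}) rfl hy.ne.symm hyy₀.symm
    (hbip.disjoint.ne_of_mem hx₀ hy₀Y).symm (fun u hu v hv hvx₀ ↦ ?_) (hconn x₀)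
  rw [mem_singleton_iff] at hu
  subst hu
  obtain rfl := (hyN v hv).resolve_left hvx₀
  exact absurd hv h

theorem hasCycleThrough_of_isPath (hbip : G.IsBipartiteWith X Y) (hx₀ : x₀ ∈ X) (hy₀Y : y₀ ∈ Y)
    (hy₀ : ∀ x ∈ X, x ≠ x₀ → G.Adj x y₀) (hx₀y₀ : ¬ G.Adj x₀ y₀)
    (hconn : ∀ z, (G.induce (univ \ {z})).Connected) (hq : q.IsPath)
    (hXq : X ⊆ {w | w ∈ q.support}) : G.HasCycleThrough X := by
  by_contra hno
  have hx₀_ne_y₀ : x₀ ≠ y₀ := hbip.disjoint.ne_of_mem hx₀ hy₀Y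
  rcases q with _ | @⟨_, y₁, _, h₁, _ | @⟨_, x₁, _, h₂, r⟩⟩
  · exact hx₀_ne_y₀ rfl
  · exact hx₀y₀ h₁
  have hy₁Y : y₁ ∈ Y := hbip.mem_of_mem_adj hx₀ h₁
  have hx₁X : x₁ ∈ X := hbip.symm.mem_of_mem_adj hy₁Y h₂
  by_cases hy' : ∀ y, G.Adj x₀ y → y = y₁
  · exact not_connected_induce_of_closed (z := y₁) (K := {x₀}) rfl h₁.ne
      (fun h ↦ hx₀_ne_y₀ h.symm) (fun h ↦ hx₀y₀ (h ▸ h₁))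
      (fun u hu v hv hvy₁ ↦ absurd (hy' v (hu ▸ hv)) hvy₁) (hconn y₁)
  obtain ⟨y', h₁', hy'⟩ : ∃ y', G.Adj x₀ y' ∧ y' ≠ y₁ := by simpa using hy'
  obtain ⟨hy'q, h₂'⟩ : y' ∉ (Walk.cons h₁ (.cons h₂ r)).support ∧ G.Adj y' x₁ := by
    simpa using notMem_support_and_adj_getVert_two_of_not_hasCycleThrough hbip hx₀ hy₀Y hy₀
      hconn hq hXq hno h₁' hy'
  -- Exchanging `y₁` for `y'` gives another path through `X`, on which `y₁` is the off-path
  -- neighbour of `x₀`.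
  have hq' : (Walk.cons h₁' (.cons h₂' r)).IsPath := hq.cons_cons_of_notMem_support h₁' h₂' hy'q
  have hXq' : X ⊆ {w | w ∈ (Walk.cons h₁' (.cons h₂' r)).support} := by
    intro x hx
    have hx₁ : x ≠ y₁ := hbip.disjoint.ne_of_mem hx hy₁Y
    have := hXq hx
    simp only [mem_ofPred_eq, Walk.support_cons, List.mem_cons] at this ⊢
    tauto
  have hN : ∀ y, G.Adj x₀ y → ∀ x, G.Adj y x → x = x₀ ∨ x = x₁ := by
    intro y hy
    by_cases hyy₁ : y = y₁
    · subst hyy₁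
      simpa using (notMem_support_and_adj_of_not_hasCycleThrough hbip hx₀ hy₀ hq' hXq' hno hy
        hy'.symm).2
    · simpa using (notMem_support_and_adj_of_not_hasCycleThrough hbip hx₀ hy₀ hq hXq hno hy
        hyy₁).2
  refine not_connected_induce_of_closed (z := x₁) (K := insert x₀ (G.neighborSet x₀))
    (mem_insert _ _) (fun h ↦ by simp [h] at hq) (by simp [hx₀_ne_y₀.symm, hx₀y₀])
    (hbip.disjoint.ne_of_mem hx₁X hy₀Y).symm (fun u hu v hv hvx₁ ↦ ?_) (hconn x₁)
  rcases hu with rfl | hu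
  · exact mem_insert_of_mem _ hv
  · exact ((hN u hu v hv).resolve_right hvx₁) ▸ mem_insert _ _

end Bipartite

end SimpleGraph

theorem stmt_8 {V : Type*} [Fintype V] (G : SimpleGraph V) (X Y : Set V)
    (hbip : IsBipartition G X Y) (hcrit : Critical G X Y) (hsat : Saturated G X Y) :
    ∀ y ∈ Y, (G.neighborSet y).ncard ≠ X.ncard - 1 := by
  rintro y₀ hy₀ hdeg
  obtain ⟨hXY, hdisj, hadj⟩ := hbip
  have hbip : G.IsBipartiteWith X Y := ⟨hdisj, hadj⟩
  obtain ⟨hstar, hnsc, hNY, hsub⟩ := hcrit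
  have hNX : G.neighborSet y₀ ⊆ X := isBipartiteWith_neighborSet_subset' hbip hy₀
  have h2 : 2 ≤ (G.neighborSet y₀).ncard := by
    have hy₀N : y₀ ∈ superNbhd G Y X := hNY.symm ▸ hy₀
    simpa [inter_eq_right.mpr hNX] using hy₀N.2
  obtain ⟨x₀, hx₀, hx₀N, hXN⟩ :=
    Set.exists_notMem_diff_singleton_subset (toFinite X) hNX (by omega)
  have hconn : ∀ z, (G.induce (univ \ {z})).Connected := by
    have := (hstar X subset_rfl (by omega)).2.2
    rw [hNY, hXY] at this
    exact fun z ↦ this z trivial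
  refine hnsc fun A hA hA3 ↦ ?_
  rcases hA.eq_or_ssubset with rfl | hAX
  · obtain ⟨_, c, hc, -, hcA⟩ := hsat x₀ hx₀ y₀ hy₀ (fun h ↦ hx₀N h.symm) A subset_rfl hA3
    refine HasCycleThrough.cycleOnWithin_univ ?_
    rcases HasCycleThrough.of_sup_fromEdgeSet ⟨_, c, hc, inter_eq_right.mp hcA⟩ with
      h | ⟨q, hq, hAq⟩
    · exact h
    · exact hasCycleThrough_of_isPath hbip hx₀ hy₀ (fun x hx hxx₀ ↦ (hXN ⟨hx, hxx₀⟩).symm)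
        (fun h ↦ hx₀N h.symm) hconn hq hAq
  · exact (hsub A hAX A subset_rfl hA3).univ_of_union hdisj hA
end

section
/- If G is a saturated critical Y-minimal bipartite graph with parts X and Y and y_1, y_2 ∈ Y both have degree 2, then N(y_1) ≠ N(y_2). -/
open SimpleGraph Set

/-!
Suppose `N(y₁) = N(y₂) = {x₁, x₂}` and delete the two edges at `y₂`. The resulting proper
subgraph still satisfies (*): for `A ⊇ {x₁, x₂}` the twins `y₁, y₂` both lie in `N̂(A)`, and
applying (*) to `A \ {x₁}` (or, when `|A| = 3`, 2-connectivity at the third vertex of `A`) shows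
`|N̂(A)| > |A|`, so losing `y₂` costs nothing in the count; 2-connectivity survives because `y₂`
is a twin of `y₁`, and after removing `y₁` as well the graph is the union of two connected
pieces in which `y₁, y₂` were leaves. By `Y`-minimality the subgraph, hence `G`, is
super-cyclic, contradicting criticality.
-/

theorem Set.exists_mem_ne_ne_of_two_lt_ncard {V : Type*} {A : Set V} (hA : 2 < A.ncard) (a b : V) :
    ∃ z ∈ A, z ≠ a ∧ z ≠ b := by
  by_contra! h
  have hsub : A ⊆ {a, b} := fun z hz => by
    by_cases hza : z = a
    exacts [Or.inl hza, Or.inr (h z hz hza)]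
  have := (Set.ncard_le_ncard hsub).trans (Set.ncard_insert_le a {b})
  rw [Set.ncard_singleton] at this
  omega

namespace SimpleGraph

variable {V : Type*} {G : SimpleGraph V}

theorem Reachable.map_of_adj {W : Type*} {G' : SimpleGraph W} (f : V → W)
    (hf : ∀ a b, G.Adj a b → G'.Reachable (f a) (f b)) {a b : V} (h : G.Reachable a b) :
    G'.Reachable (f a) (f b) := by
  rw [reachable_iff_reflTransGen] at h ⊢
  exact h.lift' f fun a b hab => (reachable_iff_reflTransGen _ _).mp (hf a b hab)

/-- Contracting `u` onto `w` maps walks of `G[T]` to walks of `G[T \ {u}]`. -/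
theorem Connected.induce_diff_singleton {T : Set V} {u w : V} (hT : (G.induce T).Connected)
    (hw : w ∈ T) (hwu : w ≠ u) (hu : ∀ z ∈ T, G.Adj u z → z = w ∨ G.Adj w z) :
    (G.induce (T \ {u})).Connected := by
  classical
  have hw' : w ∈ T \ {u} := ⟨hw, hwu⟩
  let f : T → ↥(T \ {u}) := fun a => if h : (a : V) = u then ⟨w, hw'⟩ else ⟨a, a.2, h⟩
  have hf : ∀ a b, (G.induce T).Adj a b → (G.induce (T \ {u})).Reachable (f a) (f b) := by
    rintro ⟨a, ha⟩ ⟨b, hb⟩ hab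
    simp only [comap_adj, Function.Embedding.subtype_apply] at hab
    by_cases hau : a = u <;> by_cases hbu : b = u
    · exact absurd (hau.trans hbu.symm) hab.ne
    · subst hau
      rcases hu b hb hab with rfl | hwb
      · simp [f, hbu]
      · exact Adj.reachable (by simpa [f, hbu] using hwb)
    · subst hbu
      rcases hu a ha hab.symm with rfl | hwa
      · simp [f, hau]
      · exact Adj.reachable (by simpa [f, hau] using hwa.symm)
    · exact Adj.reachable (by simpa [f, hau, hbu] using hab)
  have hf_id : ∀ a : ↥(T \ {u}), f ⟨a, a.2.1⟩ = a := fun a => by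
    simp [f, show (a : V) ≠ u from a.2.2]
  have : Nonempty ↥(T \ {u}) := ⟨⟨w, hw'⟩⟩
  refine Connected.mk fun a b => ?_
  rw [← hf_id a, ← hf_id b]
  exact (hT.preconnected _ _).map_of_adj f hf

theorem Connected.induce_diff_singleton_of_neighborSet_eq_pair {T : Set V} {u v w : V}
    (hT : (G.induce T).Connected) (hN : G.neighborSet u = {v, w}) (hv : v ∉ T) (hw : w ∈ T) :
    (G.induce (T \ {u})).Connected := by
  have huw : G.Adj u w := by simp [← mem_neighborSet, hN]
  refine hT.induce_diff_singleton hw huw.ne.symm fun z hz huz => Or.inl ?_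
  have : z ∈ G.neighborSet u := huz
  rw [hN] at this
  rcases this with rfl | rfl
  exacts [absurd hz hv, rfl]

end SimpleGraph

section Bigraph

variable {V : Type*} {G : SimpleGraph V} {X Y : Set V}

theorem SuperCyclic.mono {H : SimpleGraph V} (hHG : H ≤ G) (h : SuperCyclic H X) :
    SuperCyclic G X := by
  intro A hAX hA
  obtain ⟨v, c, hc, -, hcA⟩ := h A hAX hA
  exact ⟨v, c.mapLe hHG, hc.mapLe hHG, Set.subset_univ _, by simpa using hcA⟩

theorem IsBipartition.ne (hbip : IsBipartition G X Y) {x y : V} (hx : x ∈ X) (hy : y ∈ Y) :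
    x ≠ y := by
  rintro rfl
  exact Set.disjoint_left.mp hbip.2.1 hx hy

theorem IsBipartition.not_adj (hbip : IsBipartition G X Y) {a b : V} (ha : a ∈ X) (hb : b ∈ X) :
    ¬ G.Adj a b := fun h => by
  rcases hbip.2.2 h with ⟨-, hb'⟩ | ⟨ha', -⟩
  exacts [hbip.ne hb hb' rfl, hbip.ne ha ha' rfl]

theorem mem_superNbhd_iff_of_ncard_eq_two {A : Set V} {y : V} (hy : y ∈ Y)
    (hN : (G.neighborSet y).ncard = 2) : y ∈ superNbhd G Y A ↔ G.neighborSet y ⊆ A := by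
  have hfin : (G.neighborSet y).Finite := Set.finite_of_ncard_ne_zero (by omega)
  refine ⟨fun h => ?_, fun h => ⟨hy, by rw [Set.inter_eq_right.mpr h, hN]⟩⟩
  have := Set.eq_of_subset_of_ncard_le Set.inter_subset_right (hN ▸ h.2) hfin
  exact Set.inter_eq_right.mp this

theorem superNbhd_mono [Finite V] {A B : Set V} (hAB : A ⊆ B) :
    superNbhd G Y A ⊆ superNbhd G Y B :=
  fun _ hy => ⟨hy.1, hy.2.trans (Set.ncard_le_ncard (Set.inter_subset_inter_left _ hAB))⟩

theorem superNbhd_deleteIncidenceSet {A : Set V} {y : V} (hyA : y ∉ A) :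
    superNbhd (G.deleteIncidenceSet y) Y A = superNbhd G Y A \ {y} := by
  ext y'
  by_cases hy' : y' = y
  · subst hy'
    have : A ∩ (G.deleteIncidenceSet y').neighborSet y' = ∅ := by
      ext; simp [deleteIncidenceSet_adj]
    simp [superNbhd, this]
  · have : A ∩ (G.deleteIncidenceSet y).neighborSet y' = A ∩ G.neighborSet y' := by
      ext z
      simp only [Set.mem_inter_iff, mem_neighborSet, deleteIncidenceSet_adj]
      exact ⟨fun h => ⟨h.1, h.2.1⟩, fun h => ⟨h.1, h.2, hy', fun hz => hyA (hz ▸ h.1)⟩⟩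
    simp [superNbhd, this, hy']

theorem twoConnectedOn_deleteIncidenceSet_iff {S : Set V} {y : V} (hyS : y ∉ S) :
    TwoConnectedOn (G.deleteIncidenceSet y) S ↔ TwoConnectedOn G S := by
  have : ∀ v, (G.deleteIncidenceSet y).induce (S \ {v}) = G.induce (S \ {v}) := fun v =>
    G.induce_deleteIncidenceSet_of_notMem fun h => hyS h.1
  simp only [TwoConnectedOn, this]

theorem StarCond.exists_adj_mem_superNbhd (hstar : StarCond G X Y) (hbip : IsBipartition G X Y)
    {A : Set V} (hAX : A ⊆ X) (hA : 3 ≤ A.ncard) {x y : V} (hx : x ∈ A)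
    (hy : y ∈ superNbhd G Y A) : ∃ y' ∈ superNbhd G Y A, y' ≠ y ∧ G.Adj x y' := by
  obtain ⟨-, hS, hconn⟩ := hstar A hAX hA
  have hfin : (A ∪ superNbhd G Y A).Finite := Set.finite_of_ncard_ne_zero (by omega)
  have := (hfin.sdiff (t := {y})).to_subtype
  have : Nontrivial ↥((A ∪ superNbhd G Y A) \ {y}) := by
    refine Set.Nontrivial.coe_sort (Set.one_lt_ncard_iff_nontrivial.mp ?_)
    rw [Set.ncard_sdiff_singleton_of_mem (Set.mem_union_right A hy)]
    omega
  obtain ⟨⟨z, hzS⟩, hxz⟩ := (hconn y (Or.inr hy)).preconnected.exists_adj_of_nontrivial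
    ⟨x, Or.inl hx, hbip.ne (hAX hx) hy.1⟩
  rw [comap_adj] at hxz
  rcases hzS.1 with hzA | hzN
  · exact absurd hxz (hbip.not_adj (hAX hx) (hAX hzA))
  · exact ⟨z, hzN, hzS.2, hxz⟩

section Twins

variable {x₁ x₂ y₁ y₂ : V}

theorem TwoConnectedOn.connected_induce_diff_twins {S : Set V} (hS : TwoConnectedOn G S)
    (hx : x₁ ≠ x₂) (hN₁ : G.neighborSet y₁ = {x₁, x₂}) (hN₂ : G.neighborSet y₂ = {x₁, x₂})
    (hx₁ : x₁ ∈ S) (hx₂ : x₂ ∈ S) {z : V} (hz : z ∈ S \ {x₁, x₂, y₁, y₂}) :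
    (G.induce ((S \ {y₁}) \ {y₂})).Connected := by
  -- `y₁, y₂` are leaves of `G[S \ {a}]` hanging on `b`
  have side : ∀ a b, a ≠ b → G.neighborSet y₁ = {a, b} → G.neighborSet y₂ = {a, b} → a ∈ S →
      b ∈ S → (G.induce (((S \ {a}) \ {y₁}) \ {y₂})).Connected := by
    intro a b hab h₁ h₂ ha hb
    have hby₁ : b ≠ y₁ := (show G.Adj y₁ b by simp [← mem_neighborSet, h₁]).ne.symm
    exact ((hS.2 a ha).induce_diff_singleton_of_neighborSet_eq_pair h₁ (fun h => h.2 rfl)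
      ⟨hb, hab.symm⟩).induce_diff_singleton_of_neighborSet_eq_pair h₂ (fun h => h.1.2 rfl)
      ⟨⟨hb, hab.symm⟩, hby₁⟩
  have h₁₂ := side x₁ x₂ hx hN₁ hN₂ hx₁ hx₂
  have h₂₁ := side x₂ x₁ hx.symm (by rw [hN₁, Set.pair_comm]) (by rw [hN₂, Set.pair_comm]) hx₂ hx₁
  have hcover : (S \ {y₁}) \ {y₂} =
      (((S \ {x₁}) \ {y₁}) \ {y₂}) ∪ (((S \ {x₂}) \ {y₁}) \ {y₂}) := by
    ext v
    simp only [Set.mem_union, Set.mem_sdiff, Set.mem_singleton_iff]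
    by_cases hv : v = x₁
    · subst hv; tauto
    · tauto
  simp only [Set.mem_sdiff, Set.mem_insert_iff, Set.mem_singleton_iff, not_or] at hz
  rw [hcover]
  exact induce_union_connected h₁₂.preconnected h₂₁.preconnected
    ⟨z, ⟨⟨⟨hz.1, hz.2.1⟩, hz.2.2.2.1⟩, hz.2.2.2.2⟩, ⟨⟨hz.1, hz.2.2.1⟩, hz.2.2.2.1⟩, hz.2.2.2.2⟩

theorem TwoConnectedOn.diff_singleton_of_twins {S : Set V} (hS : TwoConnectedOn G S)
    (hy : y₁ ≠ y₂) (hx : x₁ ≠ x₂) (hN₁ : G.neighborSet y₁ = {x₁, x₂})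
    (hN₂ : G.neighborSet y₂ = {x₁, x₂}) (hy₁ : y₁ ∈ S) (hx₁ : x₁ ∈ S) (hx₂ : x₂ ∈ S) {z : V}
    (hz : z ∈ S \ {x₁, x₂, y₁, y₂}) : TwoConnectedOn G (S \ {y₂}) := by
  have hfin : S.Finite := Set.finite_of_ncard_ne_zero (by have := hS.1; omega)
  have hxy : ∀ x ∈ ({x₁, x₂} : Set V), x ≠ y₂ := fun x hx =>
    (show G.Adj y₂ x by rwa [← mem_neighborSet, hN₂]).ne.symm
  simp only [Set.mem_sdiff, Set.mem_insert_iff, Set.mem_singleton_iff, not_or] at hz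
  refine ⟨?_, fun v hv => ?_⟩
  · have hsub : {x₁, x₂, z} ⊆ S \ {y₂} := by
      simp only [Set.insert_subset_iff, Set.singleton_subset_iff, Set.mem_sdiff,
        Set.mem_singleton_iff]
      exact ⟨⟨hx₁, hxy x₁ (by simp)⟩, ⟨hx₂, hxy x₂ (by simp)⟩, hz.1, hz.2.2.2.2⟩
    have h3 : ({x₁, x₂, z} : Set V).ncard = 3 :=
      Set.ncard_eq_three.mpr ⟨x₁, x₂, z, hx, Ne.symm hz.2.1, Ne.symm hz.2.2.1, rfl⟩
    exact h3 ▸ Set.ncard_le_ncard hsub (hfin.subset Set.sdiff_subset)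
  rw [Set.sdiff_sdiff_comm]
  by_cases hv₁ : v = y₁
  · subst hv₁
    exact hS.connected_induce_diff_twins hx hN₁ hN₂ hx₁ hx₂ (z := z) (by simp [hz])
  · refine (hS.2 v hv.1).induce_diff_singleton ⟨hy₁, Ne.symm hv₁⟩ hy fun w _ hw => Or.inr ?_
    rwa [← mem_neighborSet, hN₁, ← hN₂]

theorem StarCond.ncard_lt_ncard_superNbhd_of_twins [Finite V] (hstar : StarCond G X Y)
    (hbip : IsBipartition G X Y) (hy₁ : y₁ ∈ Y) (hy₂ : y₂ ∈ Y) (hy : y₁ ≠ y₂) (hx : x₁ ≠ x₂)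
    (hN₁ : G.neighborSet y₁ = {x₁, x₂}) (hN₂ : G.neighborSet y₂ = {x₁, x₂}) {A : Set V}
    (hAX : A ⊆ X) (hA : 3 ≤ A.ncard) (hxA : {x₁, x₂} ⊆ A) :
    A.ncard < (superNbhd G Y A).ncard := by
  have hmem₁ : ∀ B, y₁ ∈ superNbhd G Y B ↔ {x₁, x₂} ⊆ B := fun B => by
    rw [mem_superNbhd_iff_of_ncard_eq_two hy₁ (by rw [hN₁, Set.ncard_pair hx]), hN₁]
  have hmem₂ : ∀ B, y₂ ∈ superNbhd G Y B ↔ {x₁, x₂} ⊆ B := fun B => by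
    rw [mem_superNbhd_iff_of_ncard_eq_two hy₂ (by rw [hN₂, Set.ncard_pair hx]), hN₂]
  have hyN : {y₁, y₂} ⊆ superNbhd G Y A :=
    Set.insert_subset ((hmem₁ A).mpr hxA) (Set.singleton_subset_iff.mpr ((hmem₂ A).mpr hxA))
  have hsplit : (superNbhd G Y A).ncard = (superNbhd G Y A \ {y₁, y₂}).ncard + 2 := by
    have := Set.ncard_le_ncard hyN
    rw [Set.ncard_sdiff hyN, Set.ncard_pair hy] at *
    omega
  suffices A.ncard ≤ (superNbhd G Y A \ {y₁, y₂}).ncard + 1 by omega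
  rcases (by omega : 4 ≤ A.ncard ∨ A.ncard = 3) with hA4 | hA3
  · -- apply (*) to `A \ {x₁}`, whose super-neighbourhood misses the twins
    have hx₁A : x₁ ∈ A := hxA (by simp)
    have hA' : (A \ {x₁}).ncard = A.ncard - 1 := Set.ncard_sdiff_singleton_of_mem hx₁A
    have hx₁ : ¬ {x₁, x₂} ⊆ A \ {x₁} := fun h => (h (by simp)).2 rfl
    have hsub : superNbhd G Y (A \ {x₁}) ⊆ superNbhd G Y A \ {y₁, y₂} := fun y hy' =>
      ⟨superNbhd_mono Set.sdiff_subset hy', by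
        rintro (rfl | rfl)
        exacts [hx₁ ((hmem₁ _).mp hy'), hx₁ ((hmem₂ _).mp hy')]⟩
    have := (hstar (A \ {x₁}) (Set.sdiff_subset.trans hAX) (by omega)).1
    have := Set.ncard_le_ncard hsub
    omega
  · -- a third vertex of `A` needs two neighbours in `N̂(A)` besides the twins
    obtain ⟨y₃, hy₃, hy₃'⟩ : (superNbhd G Y A \ {y₁, y₂}).Nonempty := by
      have := (hstar A hAX hA).1
      exact Set.nonempty_of_ncard_ne_zero (by omega)
    obtain ⟨x₃, hx₃A, hx₃₁, hx₃₂⟩ := Set.exists_mem_ne_ne_of_two_lt_ncard (A := A) (by omega) x₁ x₂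
    obtain ⟨y₄, hy₄, hy₄₃, hx₃y₄⟩ := hstar.exists_adj_mem_superNbhd hbip hAX hA hx₃A hy₃
    have hy₄' : y₄ ∉ ({y₁, y₂} : Set V) := by
      rintro (rfl | rfl)
      · have : x₃ ∈ G.neighborSet y₄ := hx₃y₄.symm
        simp [hN₁, hx₃₁, hx₃₂] at this
      · have : x₃ ∈ G.neighborSet y₄ := hx₃y₄.symm
        simp [hN₂, hx₃₁, hx₃₂] at this
    have : 1 < (superNbhd G Y A \ {y₁, y₂}).ncard :=
      (Set.one_lt_ncard (Set.toFinite _)).mpr ⟨y₃, ⟨hy₃, hy₃'⟩, y₄, ⟨hy₄, hy₄'⟩, hy₄₃.symm⟩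
    omega

theorem StarCond.deleteIncidenceSet_of_twins [Finite V] (hstar : StarCond G X Y)
    (hbip : IsBipartition G X Y) (hy₁ : y₁ ∈ Y) (hy₂ : y₂ ∈ Y) (hy : y₁ ≠ y₂) (hx : x₁ ≠ x₂)
    (hN₁ : G.neighborSet y₁ = {x₁, x₂}) (hN₂ : G.neighborSet y₂ = {x₁, x₂}) :
    StarCond (G.deleteIncidenceSet y₂) X Y := by
  intro A hAX hA
  have hy₂A : y₂ ∉ A := fun h => hbip.ne (hAX h) hy₂ rfl
  obtain ⟨hcard, hconn⟩ := hstar A hAX hA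
  rw [superNbhd_deleteIncidenceSet hy₂A]
  by_cases hy₂N : y₂ ∉ superNbhd G Y A
  · rw [Set.sdiff_singleton_eq_self hy₂N,
      twoConnectedOn_deleteIncidenceSet_iff (by simp [hy₂A, hy₂N])]
    exact ⟨hcard, hconn⟩
  rw [not_not] at hy₂N
  have hxA : {x₁, x₂} ⊆ A := by
    rwa [mem_superNbhd_iff_of_ncard_eq_two hy₂ (by rw [hN₂, Set.ncard_pair hx]), hN₂] at hy₂N
  have hy₁N : y₁ ∈ superNbhd G Y A := by
    rwa [mem_superNbhd_iff_of_ncard_eq_two hy₁ (by rw [hN₁, Set.ncard_pair hx]), hN₁]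
  have hlt := hstar.ncard_lt_ncard_superNbhd_of_twins hbip hy₁ hy₂ hy hx hN₁ hN₂ hAX hA hxA
  obtain ⟨x₃, hx₃A, hx₃₁, hx₃₂⟩ := Set.exists_mem_ne_ne_of_two_lt_ncard (A := A) (by omega) x₁ x₂
  refine ⟨by rw [Set.ncard_sdiff_singleton_of_mem hy₂N]; omega, ?_⟩
  have hS : A ∪ superNbhd G Y A \ {y₂} = (A ∪ superNbhd G Y A) \ {y₂} := by
    rw [Set.union_sdiff_distrib, Set.sdiff_singleton_eq_self hy₂A]
  rw [hS, twoConnectedOn_deleteIncidenceSet_iff (by simp)]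
  refine hconn.diff_singleton_of_twins hy hx hN₁ hN₂ (Or.inr hy₁N) (Or.inl (hxA (by simp)))
    (Or.inl (hxA (by simp))) (z := x₃) ⟨Or.inl hx₃A, ?_⟩
  simp only [Set.mem_insert_iff, Set.mem_singleton_iff, not_or]
  exact ⟨hx₃₁, hx₃₂, hbip.ne (hAX hx₃A) hy₁, hbip.ne (hAX hx₃A) hy₂⟩

end Twins

end Bigraph

theorem stmt_11_general {V : Type*} [Fintype V] (G : SimpleGraph V) (X Y : Set V)
    (hbip : IsBipartition G X Y) (hcrit : Critical G X Y)
    (hmin : YMinimal G X Y) (y₁ y₂ : V) (hy₁ : y₁ ∈ Y) (hy₂ : y₂ ∈ Y) (hne : y₁ ≠ y₂)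
    (hd₂ : (G.neighborSet y₂).ncard = 2) :
    G.neighborSet y₁ ≠ G.neighborSet y₂ := by
  intro hN
  obtain ⟨x₁, x₂, hx, hN₂⟩ := Set.ncard_eq_two.mp hd₂
  obtain ⟨hstar, hnot, -⟩ := hcrit
  have hH : StarCond (G.deleteIncidenceSet y₂) X Y :=
    hstar.deleteIncidenceSet_of_twins hbip hy₁ hy₂ hne hx (hN.trans hN₂) hN₂
  have hHG : G.deleteIncidenceSet y₂ ≠ G := fun h => by
    have : G.Adj y₂ x₁ := by simp [← mem_neighborSet, hN₂]
    rw [← h, deleteIncidenceSet_adj] at this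
    exact this.2.1 rfl
  have hbipH : ∀ ⦃u v⦄, (G.deleteIncidenceSet y₂).Adj u v → (u ∈ X ∧ v ∈ Y) ∨ (u ∈ Y ∧ v ∈ X) :=
    fun _ _ h => hbip.2.2 (deleteIncidenceSet_adj.mp h).1
  exact hnot ((hmin _ X Y (G.deleteIncidenceSet_le y₂) subset_rfl subset_rfl hbipH
    (fun h => hHG h.1) hH).mono (G.deleteIncidenceSet_le y₂))

theorem stmt_11 {V : Type*} [Fintype V] (G : SimpleGraph V) (X Y : Set V)
    (hbip : IsBipartition G X Y) (hcrit : Critical G X Y) (hsat : Saturated G X Y)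
    (hmin : YMinimal G X Y) (y₁ y₂ : V) (hy₁ : y₁ ∈ Y) (hy₂ : y₂ ∈ Y) (hne : y₁ ≠ y₂)
    (hd₁ : (G.neighborSet y₁).ncard = 2) (hd₂ : (G.neighborSet y₂).ncard = 2) :
    G.neighborSet y₁ ≠ G.neighborSet y₂ :=
  stmt_11_general G X Y hbip hcrit hmin y₁ y₂ hy₁ hy₂ hne hd₂
end

section
/- If G is a saturated critical bipartite graph with parts X and Y and |X| = 6, then some vertex of X has degree at least 4. -/
open SimpleGraph Set

/-!
Suppose every vertex of `X` has degree at most 3, and write `d` for the degree. For distinct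
`x, u, v ∈ X`, the 2-connectivity of `G[A ∪ N̂(A)]` with `A = {x, u, v}` gives `x` two neighbours
adjacent to `u` or `v`. Hence two neighbours of `x` have at most one common non-neighbour in
`X - x`, and counting non-neighbours gives `d y + d y' ≥ 6` and `d y₁ + d y₂ + d y₃ ≥ 10` for
distinct neighbours of `x`, and `d y ≥ 5` when `d x = 2`. So `x` collects weight at least 4 if each
neighbour `y` gives it `min 2 (d y - 2)`. A vertex of `Y` of degree `e ≥ 2` gives away
`e * min 2 (e - 2) ≤ 4e - 8`, with equality only for `e ∈ {2, 4}`; comparing with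
`∑_Y d = ∑_X d ≤ 18` and `|Y| ≥ |X|` forces all degrees in `Y` to be 2 or 4, with at most three
of degree 4. But a vertex of degree 2 with neighbours `x₁, x₂` produces four vertices of degree 4:
the other neighbours of `x₁` and of `x₂`, which are distinct since a common one would have
degree at least 5.
-/

section

variable {V : Type*} {G : SimpleGraph V} {X Y : Set V}

theorem IsBipartition.isBipartiteWith (h : IsBipartition G X Y) : G.IsBipartiteWith X Y :=
  ⟨h.2.1, h.2.2⟩

theorem SimpleGraph.IsBipartiteWith.ncard_sdiff_neighborSet_add_ncard [Finite V]
    (hG : G.IsBipartiteWith X Y) {y : V} (hy : y ∈ Y) :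
    (X \ G.neighborSet y).ncard + (G.neighborSet y).ncard = X.ncard :=
  Set.ncard_sdiff_add_ncard_of_subset (isBipartiteWith_neighborSet_subset' hG hy)

theorem TwoConnectedOn.two_le_ncard_neighborSet_inter {S : Set V} (h : TwoConnectedOn G S)
    {x : V} (hx : x ∈ S) : 2 ≤ (G.neighborSet x ∩ S).ncard := by
  have hS : S.Finite := Set.finite_of_ncard_pos (by have := h.1; omega)
  by_contra! hlt
  obtain ⟨r, hrS, hrx, hr⟩ : ∃ r ∈ S, r ≠ x ∧ G.neighborSet x ∩ S ⊆ {r} := by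
    rcases (Set.ncard_le_one_iff_eq (hS.inter_of_right (G.neighborSet x))).mp (by omega)
      with h0 | ⟨r, hr⟩
    · obtain ⟨r, hrS, hrx⟩ := S.exists_ne_of_one_lt_ncard (by have := h.1; omega) x
      exact ⟨r, hrS, hrx, h0.subset.trans (Set.empty_subset _)⟩
    · have hmem : r ∈ G.neighborSet x ∩ S := hr ▸ Set.mem_singleton r
      exact ⟨r, hmem.2, (G.ne_of_adj hmem.1).symm, hr.subset⟩
  obtain ⟨z, ⟨hzS, hzr⟩, hzx⟩ := (S \ {r}).exists_ne_of_one_lt_ncard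
    (by rw [Set.ncard_sdiff_singleton_of_mem hrS]; have := h.1; omega) x
  have : Nontrivial ↥(S \ {r}) :=
    ⟨⟨x, hx, hrx.symm⟩, ⟨z, hzS, hzr⟩, fun he => hzx (congrArg Subtype.val he).symm⟩
  obtain ⟨⟨w, hwS, hwr⟩, hxw⟩ :=
    (h.2 r hrS).preconnected.exists_adj_of_nontrivial ⟨x, hx, hrx.symm⟩
  exact hwr (hr ⟨hxw, hwS⟩)

theorem two_le_ncard_neighborSet_of_mem_superNbhd [Finite V] {A : Set V} {y : V}
    (hy : y ∈ superNbhd G Y A) : 2 ≤ (G.neighborSet y).ncard :=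
  hy.2.trans (Set.ncard_le_ncard Set.inter_subset_right)

def degreeWeight (d : ℕ) : ℕ := min 2 (d - 2)

theorem mul_degreeWeight_add_eight_le {d : ℕ} (hd : 2 ≤ d) : d * degreeWeight d + 8 ≤ 4 * d := by
  obtain rfl | rfl | h : d = 2 ∨ d = 3 ∨ 4 ≤ d := by omega
  · decide
  · decide
  · rw [show degreeWeight d = 2 by unfold degreeWeight; omega]
    omega

theorem mul_degreeWeight_add_eight_lt {d : ℕ} (hd : 2 ≤ d) (h₂ : d ≠ 2) (h₄ : d ≠ 4) :
    d * degreeWeight d + 8 < 4 * d := by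
  obtain rfl | h : d = 3 ∨ 5 ≤ d := by omega
  · decide
  · rw [show degreeWeight d = 2 by unfold degreeWeight; omega]
    omega

theorem Finset.sum_eq_two_mul_card_add_two_mul_card_filter {s : Finset V} {f : V → ℕ}
    (h : ∀ y ∈ s, f y = 2 ∨ f y = 4) :
    ∑ y ∈ s, f y = 2 * s.card + 2 * {y ∈ s | f y = 4}.card := by
  rw [Finset.card_filter, Finset.card_eq_sum_ones, Finset.mul_sum, Finset.mul_sum,
    ← Finset.sum_add_distrib]
  exact Finset.sum_congr rfl fun y hy => by rcases h y hy with h | h <;> simp [h]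

namespace StarCond

variable [Finite V]

theorem two_le_ncard_neighborSet_inter_union (hstar : StarCond G X Y)
    (hG : G.IsBipartiteWith X Y) {x u v : V} (hx : x ∈ X) (hu : u ∈ X) (hv : v ∈ X)
    (hux : u ≠ x) (hvx : v ≠ x) (huv : u ≠ v) :
    2 ≤ (G.neighborSet x ∩ (G.neighborSet u ∪ G.neighborSet v)).ncard := by
  set A : Set V := {x, u, v}
  have hA : A ⊆ X := by rintro z (rfl | rfl | rfl) <;> assumption
  have hA3 : A.ncard = 3 := Set.ncard_eq_three.mpr ⟨x, u, v, hux.symm, hvx.symm, huv, rfl⟩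
  refine ((hstar A hA hA3.ge).2.two_le_ncard_neighborSet_inter (Or.inl (Set.mem_insert x _))).trans
    (Set.ncard_le_ncard ?_)
  rintro y ⟨hxy, hyA | hyA⟩
  · exact absurd (hA hyA) (Set.disjoint_right.mp hG.disjoint (hG.mem_of_mem_adj hx hxy))
  refine ⟨hxy, ?_⟩
  by_contra hno
  have hsub : A ∩ G.neighborSet y ⊆ {x} := by
    rintro z ⟨rfl | rfl | rfl, hz⟩
    · rfl
    · exact absurd (Or.inl hz.symm) hno
    · exact absurd (Or.inr hz.symm) hno
  have := hyA.2.trans (Set.ncard_le_ncard hsub)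
  simp at this

theorem ncard_sdiff_insert_biUnion_le_one (hstar : StarCond G X Y) (hG : G.IsBipartiteWith X Y)
    {x : V} {S : Set V} (hx : x ∈ X) (hS : S ⊆ G.neighborSet x)
    (hdeg : (G.neighborSet x).ncard < S.ncard + 2) :
    (X \ insert x (⋃ y ∈ S, G.neighborSet y)).ncard ≤ 1 := by
  by_contra! hlt
  obtain ⟨u, v, ⟨huX, hu⟩, ⟨hvX, hv⟩, huv⟩ := (Set.one_lt_ncard_iff).mp hlt
  simp only [Set.mem_insert_iff, Set.mem_iUnion, mem_neighborSet, not_or, not_exists] at hu hv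
  have hsub : G.neighborSet x ∩ (G.neighborSet u ∪ G.neighborSet v) ⊆ G.neighborSet x \ S := by
    rintro y ⟨hxy, hy | hy⟩
    · exact ⟨hxy, fun hyS => hu.2 y hyS hy.symm⟩
    · exact ⟨hxy, fun hyS => hv.2 y hyS hy.symm⟩
  have := (hstar.two_le_ncard_neighborSet_inter_union hG hx huX hvX hu.1 hv.1 huv).trans
    ((Set.ncard_le_ncard hsub).trans_eq (Set.ncard_sdiff hS))
  omega

theorem two_le_ncard_neighborSet (hstar : StarCond G X Y) (hG : G.IsBipartiteWith X Y)
    (hX : 3 ≤ X.ncard) {x : V} (hx : x ∈ X) : 2 ≤ (G.neighborSet x).ncard := by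
  by_contra! hlt
  have := hstar.ncard_sdiff_insert_biUnion_le_one hG hx (Set.empty_subset _) (by simpa using hlt)
  simp only [Set.mem_empty_iff_false, Set.iUnion_of_empty, Set.iUnion_empty,
    insert_empty_eq, Set.ncard_sdiff_singleton_of_mem hx] at this
  omega

theorem ncard_le_ncard_neighborSet_add_one (hstar : StarCond G X Y) (hG : G.IsBipartiteWith X Y)
    {x p : V} {S : Set V} (hx : x ∈ X) (hS : S ⊆ G.neighborSet x)
    (hdeg : (G.neighborSet x).ncard < S.ncard + 2) (hp : p ∈ S)
    (hSp : ∀ y ∈ S, G.neighborSet y ⊆ G.neighborSet p) :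
    X.ncard ≤ (G.neighborSet p).ncard + 1 := by
  have hunion : insert x (⋃ y ∈ S, G.neighborSet y) = G.neighborSet p := by
    refine subset_antisymm (Set.insert_subset (G.adj_symm (hS hp)) (Set.iUnion₂_subset hSp)) ?_
    exact (Set.subset_biUnion_of_mem hp).trans (Set.subset_insert _ _)
  have := hstar.ncard_sdiff_insert_biUnion_le_one hG hx hS hdeg
  rw [hunion] at this
  have := hG.ncard_sdiff_neighborSet_add_ncard (hG.mem_of_mem_adj hx (hS hp))
  omega

theorem ncard_sdiff_neighborSet_inter_le_one (hstar : StarCond G X Y)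
    (hG : G.IsBipartiteWith X Y) {x y y' : V} (hx : x ∈ X) (hdeg : (G.neighborSet x).ncard ≤ 3)
    (hy : G.Adj x y) (hy' : G.Adj x y') (hne : y ≠ y') :
    ((X \ G.neighborSet y) ∩ (X \ G.neighborSet y')).ncard ≤ 1 := by
  have := hstar.ncard_sdiff_insert_biUnion_le_one hG hx (S := {y, y'})
    (Set.pair_subset hy hy') (by rw [Set.ncard_pair hne]; omega)
  have hxy : x ∈ G.neighborSet y := hy.symm
  rwa [Set.biUnion_pair, Set.insert_eq_of_mem (Set.mem_union_left _ hxy),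
    ← Set.sdiff_inter_sdiff] at this

theorem ncard_le_add_ncard_neighborSet (hstar : StarCond G X Y) (hG : G.IsBipartiteWith X Y)
    {x y y' : V} (hx : x ∈ X) (hdeg : (G.neighborSet x).ncard ≤ 3)
    (hy : G.Adj x y) (hy' : G.Adj x y') (hne : y ≠ y') :
    X.ncard ≤ (G.neighborSet y).ncard + (G.neighborSet y').ncard := by
  set B := X \ G.neighborSet y
  set B' := X \ G.neighborSet y'
  have hunion : (B ∪ B').ncard < X.ncard := by
    refine Set.ncard_lt_ncard ((Set.ssubset_iff_of_subset ?_).mpr ⟨x, hx, ?_⟩)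
    · exact Set.union_subset Set.sdiff_subset Set.sdiff_subset
    · rintro (⟨-, hxy⟩ | ⟨-, hxy⟩)
      exacts [hxy hy.symm, hxy hy'.symm]
  have hinter : (B ∩ B').ncard ≤ 1 :=
    hstar.ncard_sdiff_neighborSet_inter_le_one hG hx hdeg hy hy' hne
  have hB : B.ncard + _ = _ := hG.ncard_sdiff_neighborSet_add_ncard (hG.mem_of_mem_adj hx hy)
  have hB' : B'.ncard + _ = _ := hG.ncard_sdiff_neighborSet_add_ncard (hG.mem_of_mem_adj hx hy')
  have := Set.ncard_union_add_ncard_inter B B'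
  omega

theorem two_mul_ncard_le_sum_ncard_neighborSet (hstar : StarCond G X Y)
    (hG : G.IsBipartiteWith X Y) {x y₁ y₂ y₃ : V} (hx : x ∈ X)
    (hdeg : (G.neighborSet x).ncard ≤ 3) (hy₁ : G.Adj x y₁) (hy₂ : G.Adj x y₂) (hy₃ : G.Adj x y₃)
    (h₁₂ : y₁ ≠ y₂) (h₁₃ : y₁ ≠ y₃) (h₂₃ : y₂ ≠ y₃) :
    2 * X.ncard ≤ (G.neighborSet y₁).ncard + (G.neighborSet y₂).ncard
      + (G.neighborSet y₃).ncard + 2 := by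
  set B₁ := X \ G.neighborSet y₁
  set B₂ := X \ G.neighborSet y₂
  set B₃ := X \ G.neighborSet y₃
  have hunion : (B₁ ∪ B₂ ∪ B₃).ncard < X.ncard := by
    refine Set.ncard_lt_ncard ((Set.ssubset_iff_of_subset ?_).mpr ⟨x, hx, ?_⟩)
    · exact Set.union_subset (Set.union_subset Set.sdiff_subset Set.sdiff_subset) Set.sdiff_subset
    · rintro ((⟨-, hxy⟩ | ⟨-, hxy⟩) | ⟨-, hxy⟩)
      exacts [hxy hy₁.symm, hxy hy₂.symm, hxy hy₃.symm]
  have h₃ : ((B₁ ∪ B₂) ∩ B₃).ncard ≤ (B₁ ∩ B₃).ncard + (B₂ ∩ B₃).ncard := by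
    rw [Set.union_inter_distrib_right]
    exact Set.ncard_union_le _ _
  have h₁₂' : (B₁ ∩ B₂).ncard ≤ 1 :=
    hstar.ncard_sdiff_neighborSet_inter_le_one hG hx hdeg hy₁ hy₂ h₁₂
  have h₁₃' : (B₁ ∩ B₃).ncard ≤ 1 :=
    hstar.ncard_sdiff_neighborSet_inter_le_one hG hx hdeg hy₁ hy₃ h₁₃
  have h₂₃' : (B₂ ∩ B₃).ncard ≤ 1 :=
    hstar.ncard_sdiff_neighborSet_inter_le_one hG hx hdeg hy₂ hy₃ h₂₃
  have hB₁ : B₁.ncard + _ = _ := hG.ncard_sdiff_neighborSet_add_ncard (hG.mem_of_mem_adj hx hy₁)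
  have hB₂ : B₂.ncard + _ = _ := hG.ncard_sdiff_neighborSet_add_ncard (hG.mem_of_mem_adj hx hy₂)
  have hB₃ : B₃.ncard + _ = _ := hG.ncard_sdiff_neighborSet_add_ncard (hG.mem_of_mem_adj hx hy₃)
  have := Set.ncard_union_add_ncard_inter B₁ B₂
  have := Set.ncard_union_add_ncard_inter (B₁ ∪ B₂) B₃
  omega

theorem four_le_sum_degreeWeight (hstar : StarCond G X Y) (hG : G.IsBipartiteWith X Y)
    (hX : X.ncard = 6) {x : V} (hx : x ∈ X) (hdeg : (G.neighborSet x).ncard ≤ 3) {s : Finset V}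
    (hs : (s : Set V) = G.neighborSet x) :
    4 ≤ ∑ y ∈ s, degreeWeight (G.neighborSet y).ncard := by
  classical
  have hadj : ∀ y ∈ s, G.Adj x y := fun y hy => by rw [← mem_neighborSet, ← hs]; exact hy
  have hcard : s.card = (G.neighborSet x).ncard := by rw [← hs, Set.ncard_coe_finset]
  have hdeg₂ := hstar.two_le_ncard_neighborSet hG (by omega) hx
  obtain hd | hd : s.card = 2 ∨ s.card = 3 := by omega
  · obtain ⟨y₁, y₂, h₁₂, rfl⟩ := Finset.card_eq_two.mp hd
    have hbig : ∀ y ∈ ({y₁, y₂} : Finset V), 5 ≤ (G.neighborSet y).ncard := fun y hy => by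
      have := hstar.ncard_le_ncard_neighborSet_add_one hG hx
        (Set.singleton_subset_iff.mpr (hadj y hy)) (by simp; omega) rfl (by simp)
      omega
    rw [Finset.sum_pair h₁₂]
    have := hbig y₁ (by simp)
    have := hbig y₂ (by simp)
    simp only [degreeWeight]
    omega
  · obtain ⟨y₁, y₂, y₃, h₁₂, h₁₃, h₂₃, rfl⟩ := Finset.card_eq_three.mp hd
    have hy₁ := hadj y₁ (by simp)
    have hy₂ := hadj y₂ (by simp)
    have hy₃ := hadj y₃ (by simp)
    have := hstar.ncard_le_add_ncard_neighborSet hG hx hdeg hy₁ hy₂ h₁₂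
    have := hstar.ncard_le_add_ncard_neighborSet hG hx hdeg hy₁ hy₃ h₁₃
    have := hstar.ncard_le_add_ncard_neighborSet hG hx hdeg hy₂ hy₃ h₂₃
    have := hstar.two_mul_ncard_le_sum_ncard_neighborSet hG hx hdeg hy₁ hy₂ hy₃ h₁₂ h₁₃ h₂₃
    rw [Finset.sum_insert (by simp [h₁₂, h₁₃]), Finset.sum_pair h₂₃]
    simp only [degreeWeight]
    omega

theorem neighborSet_sdiff_of_neighborSet_eq_pair (hstar : StarCond G X Y)
    (hG : G.IsBipartiteWith X Y) (hX : X.ncard = 6)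
    (hdeg : ∀ x ∈ X, (G.neighborSet x).ncard ≤ 3)
    (h24 : ∀ y ∈ Y, (G.neighborSet y).ncard = 2 ∨ (G.neighborSet y).ncard = 4)
    {a x x' : V} (ha : a ∈ Y) (hNa : G.neighborSet a = {x, x'}) (hxx' : x ≠ x') :
    (G.neighborSet x \ {a}).ncard = 2 ∧
      ∀ p ∈ G.neighborSet x \ {a}, (G.neighborSet p).ncard = 4 ∧ ¬ G.Adj x' p := by
  have hxa : G.Adj x a := G.adj_symm (show x ∈ G.neighborSet a by simp [hNa])
  have hx : x ∈ X := hG.mem_of_mem_adj' ha hxa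
  have hda : (G.neighborSet a).ncard = 2 := by rw [hNa, Set.ncard_pair hxx']
  have hdx : (G.neighborSet x).ncard = 3 := by
    have := hstar.two_le_ncard_neighborSet hG (by omega) hx
    have := hdeg x hx
    by_contra hdx
    have := hstar.ncard_le_ncard_neighborSet_add_one hG hx
      (Set.singleton_subset_iff.mpr hxa) (by simp; omega) rfl (by simp)
    omega
  have hax : a ∈ G.neighborSet x := hxa
  refine ⟨by rw [Set.ncard_sdiff_singleton_of_mem hax, hdx], fun p ⟨hxp, hpa⟩ => ?_⟩
  have hap : a ≠ p := fun h => hpa h.symm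
  have hdp : (G.neighborSet p).ncard = 4 := by
    have := hstar.ncard_le_add_ncard_neighborSet hG hx hdx.le hxa hxp hap
    rcases h24 p (hG.mem_of_mem_adj hx hxp) with h | h <;> omega
  refine ⟨hdp, fun hx'p => ?_⟩
  have hsub : G.neighborSet a ⊆ G.neighborSet p := by
    rw [hNa]
    exact Set.pair_subset hxp.symm hx'p.symm
  have := hstar.ncard_le_ncard_neighborSet_add_one hG hx (S := {a, p}) (p := p)
    (Set.pair_subset hxa hxp) (by rw [Set.ncard_pair hap]; omega) (by simp)
    (by simpa using hsub)
  omega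

theorem exists_four_of_ncard_neighborSet_eq_two (hstar : StarCond G X Y)
    (hG : G.IsBipartiteWith X Y) (hX : X.ncard = 6)
    (hdeg : ∀ x ∈ X, (G.neighborSet x).ncard ≤ 3)
    (h24 : ∀ y ∈ Y, (G.neighborSet y).ncard = 2 ∨ (G.neighborSet y).ncard = 4)
    {a : V} (ha : a ∈ Y) (hda : (G.neighborSet a).ncard = 2) :
    ∃ T ⊆ Y, T.ncard = 4 ∧ ∀ p ∈ T, (G.neighborSet p).ncard = 4 := by
  obtain ⟨x₁, x₂, h₁₂, hNa⟩ := Set.ncard_eq_two.mp hda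
  obtain ⟨hc₁, h₁⟩ := hstar.neighborSet_sdiff_of_neighborSet_eq_pair hG hX hdeg h24 ha hNa h₁₂
  obtain ⟨hc₂, h₂⟩ := hstar.neighborSet_sdiff_of_neighborSet_eq_pair hG hX hdeg h24 ha
    (hNa.trans (Set.pair_comm x₁ x₂)) h₁₂.symm
  have hx₁ : x₁ ∈ X := isBipartiteWith_neighborSet_subset' hG ha (by simp [hNa])
  have hx₂ : x₂ ∈ X := isBipartiteWith_neighborSet_subset' hG ha (by simp [hNa])
  have hdisj : Disjoint (G.neighborSet x₁ \ {a}) (G.neighborSet x₂ \ {a}) :=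
    Set.disjoint_left.mpr fun p hp₁ hp₂ => (h₂ p hp₂).2 hp₁.1
  refine ⟨_ ∪ _, Set.union_subset ?_ ?_, by rw [Set.ncard_union_eq hdisj, hc₁, hc₂], ?_⟩
  · exact Set.sdiff_subset.trans (isBipartiteWith_neighborSet_subset hG hx₁)
  · exact Set.sdiff_subset.trans (isBipartiteWith_neighborSet_subset hG hx₂)
  · rintro p (hp | hp)
    exacts [(h₁ p hp).1, (h₂ p hp).1]

end StarCond

namespace SimpleGraph.IsBipartiteWith

variable [DecidableRel G.Adj] {xs ys : Finset V}

theorem coe_filter_adj (hG : G.IsBipartiteWith xs ys) {x : V} (hx : x ∈ xs) :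
    (({y ∈ ys | G.Adj x y} : Finset V) : Set V) = G.neighborSet x := by
  rw [Finset.coe_filter, isBipartiteWith_neighborSet hG hx]
  rfl

theorem sum_sum_filter_adj (hG : G.IsBipartiteWith xs ys) (f : V → ℕ) :
    ∑ x ∈ xs, ∑ y ∈ ys with G.Adj x y, f y = ∑ y ∈ ys, (G.neighborSet y).ncard * f y := by
  refine (Finset.sum_sum_bipartiteAbove_eq_sum_sum_bipartiteBelow G.Adj fun _ y => f y).trans
    (Finset.sum_congr rfl fun y hy => ?_)
  rw [Finset.sum_const, smul_eq_mul, ← Set.ncard_coe_finset, Finset.coe_bipartiteBelow,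
    isBipartiteWith_neighborSet' hG hy]
  rfl

theorem sum_ncard_neighborSet_eq (hG : G.IsBipartiteWith xs ys) :
    ∑ x ∈ xs, (G.neighborSet x).ncard = ∑ y ∈ ys, (G.neighborSet y).ncard := by
  have := hG.sum_sum_filter_adj fun _ => 1
  simp only [Finset.sum_const, smul_eq_mul, mul_one] at this
  rw [← this]
  exact Finset.sum_congr rfl fun x hx => by rw [← Set.ncard_coe_finset, hG.coe_filter_adj hx]

theorem sum_ncard_neighborSet_le (hG : G.IsBipartiteWith xs ys) {k : ℕ}
    (hdeg : ∀ x ∈ xs, (G.neighborSet x).ncard ≤ k) :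
    ∑ y ∈ ys, (G.neighborSet y).ncard ≤ k * xs.card := by
  rw [← hG.sum_ncard_neighborSet_eq, mul_comm, ← smul_eq_mul]
  exact Finset.sum_le_card_nsmul xs _ k hdeg

theorem ncard_neighborSet_eq_two_or_four (hG : G.IsBipartiteWith xs ys)
    (hdeg : ∀ x ∈ xs, (G.neighborSet x).ncard ≤ 3)
    (hweight : ∀ x ∈ xs, 4 ≤ ∑ y ∈ ys with G.Adj x y, degreeWeight (G.neighborSet y).ncard)
    (hcard : xs.card ≤ ys.card) (hYdeg : ∀ y ∈ ys, 2 ≤ (G.neighborSet y).ncard) :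
    ∀ y ∈ ys, (G.neighborSet y).ncard = 2 ∨ (G.neighborSet y).ncard = 4 := by
  by_contra! ⟨y₀, hy₀, h₂, h₄⟩
  have hlt : ∑ y ∈ ys, ((G.neighborSet y).ncard * degreeWeight (G.neighborSet y).ncard + 8)
      < ∑ y ∈ ys, 4 * (G.neighborSet y).ncard :=
    Finset.sum_lt_sum (fun y hy => mul_degreeWeight_add_eight_le (hYdeg y hy))
      ⟨y₀, hy₀, mul_degreeWeight_add_eight_lt (hYdeg y₀ hy₀) h₂ h₄⟩
  have hweight' : xs.card * 4 ≤
      ∑ y ∈ ys, (G.neighborSet y).ncard * degreeWeight (G.neighborSet y).ncard := by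
    rw [← hG.sum_sum_filter_adj]
    simpa using Finset.card_nsmul_le_sum xs _ 4 hweight
  have hsum := hG.sum_ncard_neighborSet_le hdeg
  rw [Finset.sum_add_distrib, ← Finset.mul_sum] at hlt
  simp only [Finset.sum_const, smul_eq_mul] at hlt
  omega

theorem two_mul_card_filter_ncard_neighborSet_eq_four_le (hG : G.IsBipartiteWith xs ys)
    (hdeg : ∀ x ∈ xs, (G.neighborSet x).ncard ≤ 3) (hcard : xs.card ≤ ys.card)
    (h24 : ∀ y ∈ ys, (G.neighborSet y).ncard = 2 ∨ (G.neighborSet y).ncard = 4) :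
    2 * {y ∈ ys | (G.neighborSet y).ncard = 4}.card ≤ xs.card := by
  have := Finset.sum_eq_two_mul_card_add_two_mul_card_filter h24
  have := hG.sum_ncard_neighborSet_le hdeg
  omega

end SimpleGraph.IsBipartiteWith

end

theorem stmt_13_general {V : Type*} [Fintype V] (G : SimpleGraph V) (X Y : Set V)
    (hbip : IsBipartition G X Y) (hcrit : Critical G X Y)
    (hX : X.ncard = 6) :
    ∃ x ∈ X, 4 ≤ (G.neighborSet x).ncard := by
  classical
  by_contra! hlow
  obtain ⟨hstar, -, hNY, -⟩ := hcrit
  obtain ⟨xs, rfl⟩ := X.toFinite.exists_finset_coe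
  obtain ⟨ys, rfl⟩ := Y.toFinite.exists_finset_coe
  have hG := hbip.isBipartiteWith
  have hxs : xs.card = 6 := by simpa using hX
  have hcard : xs.card ≤ ys.card := by simpa [hNY] using (hstar _ subset_rfl (by omega)).1
  have hdeg : ∀ x ∈ xs, (G.neighborSet x).ncard ≤ 3 := fun x hx => Nat.le_of_lt_succ (hlow x hx)
  have h24 := hG.ncard_neighborSet_eq_two_or_four hdeg
    (fun x hx => hstar.four_le_sum_degreeWeight hG hX hx (hdeg x hx) (hG.coe_filter_adj hx))
    hcard fun y hy => two_le_ncard_neighborSet_of_mem_superNbhd (hNY.ge hy)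
  set H := {y ∈ ys | (G.neighborSet y).ncard = 4}
  have hH : 2 * H.card ≤ xs.card :=
    hG.two_mul_card_filter_ncard_neighborSet_eq_four_le hdeg hcard h24
  obtain ⟨a, ha, haH⟩ := Finset.exists_mem_notMem_of_card_lt_card (s := H) (t := ys) (by omega)
  obtain ⟨T, hTY, hT, hT4⟩ := hstar.exists_four_of_ncard_neighborSet_eq_two hG hX hdeg h24 ha
    ((h24 a ha).resolve_right fun h => haH (by simp [H, ha, h]))
  have : T.ncard ≤ H.card := by
    rw [← Set.ncard_coe_finset]
    exact Set.ncard_le_ncard fun p hp => by simp [H, Finset.mem_coe.mp (hTY hp), hT4 p hp]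
  omega

theorem stmt_13 {V : Type*} [Fintype V] (G : SimpleGraph V) (X Y : Set V)
    (hbip : IsBipartition G X Y) (hcrit : Critical G X Y) (hsat : Saturated G X Y)
    (hX : X.ncard = 6) :
    ∃ x ∈ X, 4 ≤ (G.neighborSet x).ncard :=
  stmt_13_general G X Y hbip hcrit hX
end

section
/- Let C be a cycle in a bipartite graph G with parts X and Y, and let u, v ∈ V(C) ∩ X. If u and v have at most a crossings on C, then d_C(u) + d_C(v) ≤ |V(C)|/2 + 2 + a, where d_C(w) denotes the number of neighbors of w on C. -/
open SimpleGraph Set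

/-!
Number the cycle from `x i`, so that `x j` sits at position `m = (j - i).val`, and let `p t`,
`q t` say that `y (i + t)` is adjacent to `x i`, resp. `x j`. For `0 < t < m`, `p t` and
`q (t - 1)` hold together only at a crossing, so `#{p on (0, m)} + #{q on [0, m - 1)}` is at most
`m - 1` plus the crossings on that arc; symmetrically on the arc `(m, k)`. The only positions
missed are `0` and `k - 1` for `p` and `m - 1` and `m` for `q`, whence
`d(x i) + d(x j) ≤ k + 2 + a`, while the cycle has `2 k` vertices.
-/

open Finset

lemma Finset.card_filter_add_card_filter_le {α : Type*} [DecidableEq α] (s : Finset α)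
    (p q : α → Prop) [DecidablePred p] [DecidablePred q] :
    #{a ∈ s | p a} + #{a ∈ s | q a} ≤ #s + #{a ∈ s | p a ∧ q a} := by
  rw [filter_and, ← card_union_add_card_inter]
  grw [card_le_card (union_subset (filter_subset p s) (filter_subset q s))]

lemma card_filter_le_of_cover (s u w : Finset ℕ) (a b : ℕ) (p : ℕ → Prop) [DecidablePred p]
    (hcover : ∀ t ∈ s, t ∈ u ∨ t + 1 ∈ w ∨ t = a ∨ t = b) :
    #{t ∈ s | p t} ≤ #{t ∈ u | p t} + #{t ∈ w | p (t - 1)} + 2 := by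
  have hsub : {t ∈ s | p t} ⊆
      {t ∈ u | p t} ∪ {t ∈ w | p (t - 1)}.image (· - 1) ∪ {a, b} := by
    intro t ht
    obtain ⟨hts, hpt⟩ := mem_filter.1 ht
    rcases hcover t hts with htu | htw | rfl | rfl
    · simp [htu, hpt]
    · refine mem_union_left _ (mem_union_right _ (mem_image.2 ⟨t + 1, ?_, by simp⟩))
      simp [htw, hpt]
    · simp
    · simp
  calc #{t ∈ s | p t}
      ≤ #({t ∈ u | p t} ∪ {t ∈ w | p (t - 1)}.image (· - 1) ∪ {a, b}) := card_le_card hsub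
    _ ≤ #{t ∈ u | p t} + #{t ∈ w | p (t - 1)} + 2 := by
      grw [Finset.card_union_le, Finset.card_union_le, card_image_le, card_le_two]

lemma card_filter_range_add_card_filter_range_le (p q : ℕ → Prop) [DecidablePred p]
    [DecidablePred q] {m k : ℕ} (hm : 0 < m) (hmk : m < k) :
    #{t ∈ range k | p t} + #{t ∈ range k | q t} ≤ k + 2 +
      #{t ∈ range k | (0 < t ∧ t < m ∧ p t ∧ q (t - 1)) ∨ (m < t ∧ p (t - 1) ∧ q t)} := by
  have hp := card_filter_le_of_cover (range k) (Ioo 0 m) (Ioo m k) 0 (k - 1) p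
    (fun t ht => by simp only [Finset.mem_range, Finset.mem_Ioo] at ht ⊢; omega)
  have hq := card_filter_le_of_cover (range k) (Ioo m k) (Ioo 0 m) (m - 1) m q
    (fun t ht => by simp only [Finset.mem_range, Finset.mem_Ioo] at ht ⊢; omega)
  have harc₁ := card_filter_add_card_filter_le (Ioo 0 m) p (fun t => q (t - 1))
  have harc₂ := card_filter_add_card_filter_le (Ioo m k) q (fun t => p (t - 1))
  have hcross : #{t ∈ Ioo 0 m | p t ∧ q (t - 1)} + #{t ∈ Ioo m k | q t ∧ p (t - 1)} ≤
      #{t ∈ range k | (0 < t ∧ t < m ∧ p t ∧ q (t - 1)) ∨ (m < t ∧ p (t - 1) ∧ q t)} := by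
    rw [← card_union_of_disjoint]
    · refine card_le_card fun t ht => ?_
      simp only [Finset.mem_union, mem_filter, Finset.mem_Ioo, Finset.mem_range] at ht ⊢
      rcases ht with ⟨⟨ht₀, htm⟩, hpt, hqt⟩ | ⟨⟨hmt, htk⟩, hqt, hpt⟩
      · exact ⟨by omega, Or.inl ⟨ht₀, htm, hpt, hqt⟩⟩
      · exact ⟨htk, Or.inr ⟨hmt, hpt, hqt⟩⟩
    · refine disjoint_filter_filter (disjoint_left.2 fun t h₁ h₂ => ?_)
      simp only [Finset.mem_Ioo] at h₁ h₂
      omega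
  simp only [Nat.card_Ioo] at harc₁ harc₂
  omega

lemma ZMod.card_filter_eq_card_filter_range {k : ℕ} [NeZero k] (i : ZMod k) (P : ZMod k → Prop)
    [DecidablePred P] : #{c | P c} = #{t ∈ Finset.range k | P (i + (t : ℕ))} := by
  refine (card_nbij' (fun t : ℕ => i + (t : ZMod k)) (fun c : ZMod k => (c - i).val)
    ?_ ?_ ?_ ?_).symm
  · intro t ht
    simpa using (mem_filter.1 ht).2
  · intro c hc
    simpa [ZMod.val_lt] using (mem_filter.1 hc).2
  · intro t ht
    simp [ZMod.val_natCast_of_lt (Finset.mem_range.1 (mem_filter.1 ht).1)]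
  · intro c _
    simp

lemma ZMod.card_filter_range_le_ncard {k : ℕ} [NeZero k] (i : ZMod k) {p : ℕ → Prop}
    [DecidablePred p] {s : Set (ZMod k)} (h : ∀ t < k, p t → i + (t : ℕ) ∈ s) :
    #{t ∈ Finset.range k | p t} ≤ s.ncard := by
  classical
  calc #{t ∈ Finset.range k | p t} ≤ #{t ∈ Finset.range k | i + (t : ℕ) ∈ s} := by
        refine card_le_card fun t ht => ?_
        simp only [mem_filter, Finset.mem_range] at ht ⊢
        exact ⟨ht.1, h t ht.1 ht.2⟩
    _ = s.ncard := by
      rw [← ZMod.card_filter_eq_card_filter_range i (· ∈ s), ← ncard_coe_finset, coe_filter_univ,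
        ofPred_mem_eq]

lemma ZMod.crossing_of_nat_crossing {k : ℕ} [NeZero k] (P Q : ZMod k → Prop) {i j : ZMod k}
    {t : ℕ} (ht : t < k)
    (hcross : (0 < t ∧ t < (j - i).val ∧ P (i + t) ∧ Q (i + ↑(t - 1))) ∨
      ((j - i).val < t ∧ P (i + ↑(t - 1)) ∧ Q (i + t))) :
    i + t ≠ i ∧ i + t ≠ j ∧
      (((i + t - i).val < (j - i).val ∧ P (i + t) ∧ Q (i + t - 1)) ∨
        ((j - i).val < (i + t - i).val ∧ P (i + t - 1) ∧ Q (i + t))) := by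
  have hval : (i + t - i).val = t := by rw [add_sub_cancel_left, ZMod.val_natCast_of_lt ht]
  have ht₀ : 1 ≤ t := by omega
  rw [hval]
  rw [Nat.cast_sub ht₀, Nat.cast_one, ← add_sub_assoc] at hcross
  refine ⟨fun h => ?_, fun h => ?_, hcross.imp (fun h => h.2) id⟩
  · rw [← hval, h, sub_self, ZMod.val_zero] at ht₀
    omega
  · rw [← h, add_sub_cancel_left, ZMod.val_natCast_of_lt ht] at hcross
    omega

lemma IsBipartition.not_adj_of_mem_left_s16 {V : Type*} {G : SimpleGraph V} {X Y : Set V}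
    (hbip : IsBipartition G X Y) {u v : V} (hu : u ∈ X) (hv : v ∈ X) : ¬ G.Adj u v := fun h =>
  (hbip.2.2 h).elim (fun h => hbip.2.1.notMem_of_mem_left hv h.2)
    (fun h => hbip.2.1.notMem_of_mem_left hu h.1)

section CycleNeighbors

variable {V : Type*} {G : SimpleGraph V} {X Y : Set V} {k : ℕ} {x y : ZMod k → V}

lemma ncard_range_union_range [NeZero k] (hxinj : Function.Injective x)
    (hyinj : Function.Injective y) (hdisj : Disjoint (range x) (range y)) :
    (range x ∪ range y).ncard = 2 * k := by
  rw [ncard_union_eq hdisj, ncard_range_of_injective hxinj, ncard_range_of_injective hyinj,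
    Nat.card_zmod]
  ring

lemma IsBipartition.ncard_inter_neighborSet [NeZero k] [DecidableRel G.Adj]
    (hbip : IsBipartition G X Y) (hxX : ∀ c, x c ∈ X) (hyinj : Function.Injective y)
    (w : ZMod k) :
    ((range x ∪ range y) ∩ G.neighborSet (x w)).ncard = #{c | G.Adj (x w) (y c)} := by
  have hnbhd : (range x ∪ range y) ∩ G.neighborSet (x w) = y '' {c | G.Adj (x w) (y c)} := by
    ext v
    simp only [mem_inter_iff, mem_union, Set.mem_range, mem_neighborSet, Set.mem_image,
      mem_ofPred_eq]
    constructor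
    · rintro ⟨⟨c, rfl⟩ | ⟨c, rfl⟩, hadj⟩
      · exact (hbip.not_adj_of_mem_left_s16 (hxX w) (hxX c) hadj).elim
      · exact ⟨c, hadj, rfl⟩
    · rintro ⟨c, hadj, rfl⟩
      exact ⟨Or.inr ⟨c, rfl⟩, hadj⟩
  rw [hnbhd, ncard_image_of_injective _ hyinj, ← ncard_coe_finset, coe_filter_univ]

end CycleNeighbors

theorem stmt_16_general {V : Type*} (G : SimpleGraph V) (X Y : Set V)
    (hbip : IsBipartition G X Y)
    (k : ℕ) (hk : 2 ≤ k) (x y : ZMod k → V)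
    (hxinj : Function.Injective x) (hyinj : Function.Injective y)
    (hxX : ∀ i, x i ∈ X) (hyY : ∀ i, y i ∈ Y)
    (i j : ZMod k) (hij : i ≠ j) (a : ℕ)
    (hcross : {c : ZMod k | c ≠ i ∧ c ≠ j ∧
      (((c - i).val < (j - i).val ∧ G.Adj (x i) (y c) ∧ G.Adj (x j) (y (c - 1))) ∨
       ((j - i).val < (c - i).val ∧ G.Adj (x i) (y (c - 1)) ∧ G.Adj (x j) (y c)))}.ncard ≤ a) :
    ((Set.range x ∪ Set.range y) ∩ G.neighborSet (x i)).ncard +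
      ((Set.range x ∪ Set.range y) ∩ G.neighborSet (x j)).ncard ≤
      (Set.range x ∪ Set.range y).ncard / 2 + 2 + a := by
  classical
  have : NeZero k := ⟨by omega⟩
  have hm : 0 < (j - i).val := ZMod.val_pos.2 (sub_ne_zero.2 hij.symm)
  have hcount := card_filter_range_add_card_filter_range_le
    (fun t : ℕ => G.Adj (x i) (y (i + t))) (fun t : ℕ => G.Adj (x j) (y (i + t))) hm
    (ZMod.val_lt _)
  have hcross' := hcross.trans' (ZMod.card_filter_range_le_ncard i fun t ht h =>
    ZMod.crossing_of_nat_crossing (fun c => G.Adj (x i) (y c)) (fun c => G.Adj (x j) (y c)) ht h)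
  have hdisj : Disjoint (range x) (range y) :=
    hbip.2.1.mono (range_subset_iff.2 hxX) (range_subset_iff.2 hyY)
  rw [hbip.ncard_inter_neighborSet hxX hyinj, hbip.ncard_inter_neighborSet hxX hyinj,
    ncard_range_union_range hxinj hyinj hdisj, ZMod.card_filter_eq_card_filter_range i,
    ZMod.card_filter_eq_card_filter_range i]
  omega

theorem stmt_16 {V : Type*} [Fintype V] (G : SimpleGraph V) (X Y : Set V)
    (hbip : IsBipartition G X Y)
    (k : ℕ) (hk : 2 ≤ k) (x y : ZMod k → V)
    (hxinj : Function.Injective x) (hyinj : Function.Injective y)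
    (hxX : ∀ i, x i ∈ X) (hyY : ∀ i, y i ∈ Y)
    (hadj1 : ∀ i, G.Adj (x i) (y i)) (hadj2 : ∀ i, G.Adj (y i) (x (i + 1)))
    (i j : ZMod k) (hij : i ≠ j) (a : ℕ)
    (hcross : {c : ZMod k | c ≠ i ∧ c ≠ j ∧
      (((c - i).val < (j - i).val ∧ G.Adj (x i) (y c) ∧ G.Adj (x j) (y (c - 1))) ∨
       ((j - i).val < (c - i).val ∧ G.Adj (x i) (y (c - 1)) ∧ G.Adj (x j) (y c)))}.ncard ≤ a) :
    ((Set.range x ∪ Set.range y) ∩ G.neighborSet (x i)).ncard +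
      ((Set.range x ∪ Set.range y) ∩ G.neighborSet (x j)).ncard ≤
      (Set.range x ∪ Set.range y).ncard / 2 + 2 + a :=
  stmt_16_general G X Y hbip k hk x y hxinj hyinj hxX hyY i j hij a hcross
end
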